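/- arXiv:2502.01583 — 5 statements merged into one kernel-verified Lean document; each statement's English description precedes it below -/
import Mathlib

section
/- Let $a \in \mathbb{R}^{p\times p}$ be symmetric, $P \in \mathbb{R}^{(d-p)\times(d-p)}$ symmetric, $q \in \mathbb{R}^{(d-p)\times p}$, and for $\mu$ not an eigenvalue of $a$ define $L_i(\mu) = \lambda_i(P - q(a-\mu I_p)^{-1}q^\top)$, the $i$-th largest eigenvalue. Then on any open interval between two consecutive eigenvalues of $a$, each function $L_i$ is non-increasing. -/
open Matrix Module Submodule

/-- The `i`-th largest eigenvalue of a real matrix (meaningful for Hermitian matrices;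
`0` otherwise). `i = 0` gives the largest eigenvalue. -/
noncomputable def ithLargest {n : ℕ} (i : Fin n) (M : Matrix (Fin n) (Fin n) ℝ) : ℝ :=
  if h : M.IsHermitian then (h.eigenvalues ∘ Tuple.sort h.eigenvalues) i.rev else 0


section EigAux

variable {n : ℕ}

lemma repr_zero_of_mem_span (b : OrthonormalBasis (Fin n) ℝ (EuclideanSpace ℝ (Fin n)))
    (s : Finset (Fin n)) {x : EuclideanSpace ℝ (Fin n)}
    (hx : x ∈ Submodule.span ℝ (b '' (s : Set (Fin n)))) {k : Fin n} (hk : k ∉ s) :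
    b.repr x k = 0 := by
  induction hx using Submodule.span_induction with
  | mem y hy =>
    obtain ⟨mm, hm, rfl⟩ := hy
    rw [b.repr_self, EuclideanSpace.single_apply]
    have : k ≠ mm := fun h => hk (h ▸ hm)
    simp [this]
  | zero => simp
  | add y z hy hz ihy ihz => simp [ihy, ihz]
  | smul r y hy ih => simp [_root_.map_smul, ih]

lemma dot_eq_sum_repr (b : OrthonormalBasis (Fin n) ℝ (EuclideanSpace ℝ (Fin n)))
    (x y : EuclideanSpace ℝ (Fin n)) :
    ⇑x ⬝ᵥ ⇑y = ∑ k, b.repr x k * b.repr y k := by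
  have h := b.repr.inner_map_map x y
  simp only [PiLp.inner_apply, RCLike.inner_apply, conj_trivial] at h
  simpa [dotProduct, mul_comm] using h.symm

lemma norm_sq_eq_sum_repr (b : OrthonormalBasis (Fin n) ℝ (EuclideanSpace ℝ (Fin n)))
    (x : EuclideanSpace ℝ (Fin n)) :
    ‖x‖ ^ 2 = ∑ k, (b.repr x k) ^ 2 := by
  have h := b.repr.inner_map_map x x
  simp only [PiLp.inner_apply, RCLike.inner_apply, conj_trivial] at h
  rw [← real_inner_self_eq_norm_sq]
  simp only [PiLp.inner_apply, RCLike.inner_apply, conj_trivial]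
  rw [← h]
  simp [sq]

lemma dot_mulVec_eq_sum {M : Matrix (Fin n) (Fin n) ℝ} (hM : M.IsHermitian)
    (x : EuclideanSpace ℝ (Fin n)) :
    ⇑x ⬝ᵥ (M *ᵥ ⇑x) = ∑ k, hM.eigenvalues k * (hM.eigenvectorBasis.repr x k) ^ 2 := by
  classical
  set b := hM.eigenvectorBasis with hb
  set c : Fin n → ℝ := fun k => b.repr x k with hc
  set y : EuclideanSpace ℝ (Fin n) := ∑ k, (hM.eigenvalues k * c k) • b k with hy
  have hxs : (∑ k, c k • b k) = x := b.sum_repr x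
  have hmv : M *ᵥ ⇑x = ⇑y := by
    conv_lhs => rw [← hxs]
    have h1 : ⇑(∑ k, c k • b k) = ∑ k, c k • ⇑(b k) := by
      simp only [WithLp.ofLp_sum, WithLp.ofLp_smul]
    have h2 : ⇑y = ∑ k, (hM.eigenvalues k * c k) • ⇑(b k) := by
      simp only [hy, WithLp.ofLp_sum, WithLp.ofLp_smul]
    rw [h1, h2]
    have hlin := map_sum M.mulVecLin (fun k => c k • ⇑(b k)) Finset.univ
    simp only [_root_.map_smul, Matrix.mulVecLin_apply] at hlin
    rw [hlin]
    refine Finset.sum_congr rfl fun k _ => ?_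
    rw [hM.mulVec_eigenvectorBasis, smul_smul, mul_comm]
  have hry : ∀ j, b.repr y j = hM.eigenvalues j * c j := by
    intro j
    rw [hy, map_sum]
    have : ∀ k, b.repr ((hM.eigenvalues k * c k) • b k) = (hM.eigenvalues k * c k) • EuclideanSpace.single k 1 := by
      intro k; rw [_root_.map_smul, b.repr_self]
    simp only [this]
    have : (∑ k, (hM.eigenvalues k * c k) • EuclideanSpace.single k (1:ℝ)) j
        = ∑ k, (hM.eigenvalues k * c k) • (EuclideanSpace.single k (1:ℝ) j) := by
      simp only [WithLp.ofLp_sum, WithLp.ofLp_smul, Finset.sum_apply, Pi.smul_apply]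
    rw [this]
    simp [EuclideanSpace.single_apply, mul_comm]
  rw [hmv, dot_eq_sum_repr b x y]
  refine Finset.sum_congr rfl fun k _ => ?_
  rw [hry k]
  ring

lemma finrank_span_onb (b : OrthonormalBasis (Fin n) ℝ (EuclideanSpace ℝ (Fin n)))
    (t : Finset (Fin n)) :
    finrank ℝ (span ℝ (b '' (t : Set (Fin n)))) = t.card := by
  have h1 : (b '' (t : Set (Fin n))) = Set.range (fun k : {k // k ∈ t} => b ↑k) :=
    Set.image_eq_range _ _
  have h2 : LinearIndependent ℝ (fun k : {x // x ∈ t} => b ↑k) :=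
    (b.orthonormal.comp _ Subtype.coe_injective).linearIndependent
  rw [h1, finrank_span_eq_card h2]
  simp

lemma eig_mono {A B : Matrix (Fin n) (Fin n) ℝ} (hA : A.IsHermitian) (hB : B.IsHermitian)
    (hBA : (B - A).PosSemidef) (j : Fin n) :
    (hA.eigenvalues ∘ Tuple.sort hA.eigenvalues) j
      ≤ (hB.eigenvalues ∘ Tuple.sort hB.eigenvalues) j := by
  classical
  set σA := Tuple.sort hA.eigenvalues with hσA
  set σB := Tuple.sort hB.eigenvalues with hσB
  set bA := hA.eigenvectorBasis with hbA
  set bB := hB.eigenvectorBasis with hbB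
  set sA : Finset (Fin n) := (Finset.Ici j).image σA with hsA
  set sB : Finset (Fin n) := (Finset.Iic j).image σB with hsB
  set SA := span ℝ (bA '' (sA : Set (Fin n))) with hSA
  set SB := span ℝ (bB '' (sB : Set (Fin n))) with hSB
  have hrA : finrank ℝ SA = n - j := by
    rw [hSA, finrank_span_onb, hsA, Finset.card_image_of_injective _ σA.injective]
    simp
  have hrB : finrank ℝ SB = j + 1 := by
    rw [hSB, finrank_span_onb, hsB, Finset.card_image_of_injective _ σB.injective]
    simp
  have hsup : finrank ℝ ↥(SA ⊔ SB) ≤ n := by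
    refine le_trans (Submodule.finrank_le _) ?_
    simp
  have hkey := Submodule.finrank_sup_add_finrank_inf_eq SA SB
  have hpos : 0 < finrank ℝ ↥(SA ⊓ SB) := by
    have hj := j.isLt
    omega
  obtain ⟨x, hxne⟩ := finrank_pos_iff_exists_ne_zero.mp hpos
  have hxS : (x : EuclideanSpace ℝ (Fin n)) ∈ SA ⊓ SB := x.2
  have hx0 : (x : EuclideanSpace ℝ (Fin n)) ≠ 0 := by
    simpa [Submodule.coe_eq_zero] using hxne
  set xv : EuclideanSpace ℝ (Fin n) := (x : EuclideanSpace ℝ (Fin n)) with hxv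
  have hnorm : 0 < ‖xv‖ ^ 2 := pow_pos (norm_pos_iff.mpr hx0) 2
  -- lower bound for A
  have hA_low : (hA.eigenvalues ∘ σA) j * ‖xv‖ ^ 2 ≤ ⇑xv ⬝ᵥ (A *ᵥ ⇑xv) := by
    rw [dot_mulVec_eq_sum hA, norm_sq_eq_sum_repr bA, Finset.mul_sum]
    refine Finset.sum_le_sum fun k _ => ?_
    by_cases hk : k ∈ sA
    · obtain ⟨mm, hm, rfl⟩ := Finset.mem_image.mp hk
      have : (hA.eigenvalues ∘ σA) j ≤ hA.eigenvalues (σA mm) :=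
        Tuple.monotone_sort hA.eigenvalues (Finset.mem_Ici.mp hm)
      nlinarith [sq_nonneg (bA.repr xv (σA mm))]
    · rw [repr_zero_of_mem_span bA sA hxS.1 hk]
      simp
  have hB_high : ⇑xv ⬝ᵥ (B *ᵥ ⇑xv) ≤ (hB.eigenvalues ∘ σB) j * ‖xv‖ ^ 2 := by
    rw [dot_mulVec_eq_sum hB, norm_sq_eq_sum_repr bB, Finset.mul_sum]
    refine Finset.sum_le_sum fun k _ => ?_
    by_cases hk : k ∈ sB
    · obtain ⟨mm, hm, rfl⟩ := Finset.mem_image.mp hk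
      have : hB.eigenvalues (σB mm) ≤ (hB.eigenvalues ∘ σB) j :=
        Tuple.monotone_sort hB.eigenvalues (Finset.mem_Iic.mp hm)
      nlinarith [sq_nonneg (bB.repr xv (σB mm))]
    · rw [repr_zero_of_mem_span bB sB hxS.2 hk]
      simp
  have hmid : ⇑xv ⬝ᵥ (A *ᵥ ⇑xv) ≤ ⇑xv ⬝ᵥ (B *ᵥ ⇑xv) := by
    have h0 : (0:ℝ) ≤ ⇑xv ⬝ᵥ ((B - A) *ᵥ ⇑xv) := by
      simpa using hBA.re_dotProduct_nonneg ⇑xv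
    rw [sub_mulVec, dotProduct_sub] at h0
    linarith
  have := le_trans (le_trans hA_low hmid) hB_high
  exact le_of_mul_le_mul_right (by linarith) hnorm

end EigAux


section SpecAux
variable {p : ℕ} {a : Matrix (Fin p) (Fin p) ℝ}

lemma decomp_sub_smul (ha : a.IsHermitian) (μ : ℝ) :
    a - μ • (1 : Matrix (Fin p) (Fin p) ℝ)
      = (ha.eigenvectorUnitary : Matrix (Fin p) (Fin p) ℝ)
        * diagonal (fun k => ha.eigenvalues k - μ)
        * star (ha.eigenvectorUnitary : Matrix (Fin p) (Fin p) ℝ) := by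
  set U := (ha.eigenvectorUnitary : Matrix (Fin p) (Fin p) ℝ) with hU
  have hU1 : U * star U = 1 := Unitary.coe_mul_star_self _
  have hsmul : μ • (1 : Matrix (Fin p) (Fin p) ℝ)
      = U * diagonal (fun _ => μ) * star U := by
    rw [Matrix.smul_one_eq_diagonal]
    calc diagonal (fun _ => μ) = μ • (1 : Matrix (Fin p) (Fin p) ℝ) := by
          rw [Matrix.smul_one_eq_diagonal]
      _ = μ • (U * star U) := by rw [hU1]
      _ = U * diagonal (fun _ => μ) * star U := by
          rw [← Matrix.smul_one_eq_diagonal, mul_smul_comm, smul_mul_assoc, mul_one]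
  conv_lhs => rw [ha.spectral_theorem, hsmul]
  rw [Unitary.conjStarAlgAut_apply, RCLike.ofReal_real_eq_id, Function.id_comp]
  rw [← sub_mul, ← mul_sub, diagonal_sub]

lemma det_sub_smul (ha : a.IsHermitian) (μ : ℝ) :
    (a - μ • (1 : Matrix (Fin p) (Fin p) ℝ)).det
      = (ha.eigenvectorUnitary : Matrix (Fin p) (Fin p) ℝ).det
        * (∏ k, (ha.eigenvalues k - μ))
        * (star (ha.eigenvectorUnitary : Matrix (Fin p) (Fin p) ℝ)).det := by
  rw [decomp_sub_smul ha μ, det_mul, det_mul, det_diagonal]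

lemma inv_sub_smul (ha : a.IsHermitian) {μ : ℝ}
    (hne : ∀ k, ha.eigenvalues k - μ ≠ 0) :
    (a - μ • (1 : Matrix (Fin p) (Fin p) ℝ))⁻¹
      = (ha.eigenvectorUnitary : Matrix (Fin p) (Fin p) ℝ)
        * diagonal (fun k => (ha.eigenvalues k - μ)⁻¹)
        * star (ha.eigenvectorUnitary : Matrix (Fin p) (Fin p) ℝ) := by
  set U := (ha.eigenvectorUnitary : Matrix (Fin p) (Fin p) ℝ) with hU
  have hU1 : U * star U = 1 := Unitary.coe_mul_star_self _
  have hU2 : star U * U = 1 := Unitary.coe_star_mul_self _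
  apply Matrix.inv_eq_right_inv
  rw [decomp_sub_smul ha μ]
  calc U * diagonal (fun k => ha.eigenvalues k - μ) * star U
        * (U * diagonal (fun k => (ha.eigenvalues k - μ)⁻¹) * star U)
      = U * diagonal (fun k => ha.eigenvalues k - μ) * (star U * U)
        * diagonal (fun k => (ha.eigenvalues k - μ)⁻¹) * star U := by
        noncomm_ring
    _ = U * (diagonal (fun k => ha.eigenvalues k - μ)
        * diagonal (fun k => (ha.eigenvalues k - μ)⁻¹)) * star U := by
        rw [hU2, mul_one]; noncomm_ring
    _ = 1 := by
        rw [diagonal_mul_diagonal]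
        have : (fun k => (ha.eigenvalues k - μ) * (ha.eigenvalues k - μ)⁻¹)
            = fun _ => (1:ℝ) := by
          funext k; exact mul_inv_cancel₀ (hne k)
        rw [this, diagonal_one, mul_one, hU1]

end SpecAux

/-- With `a`, `P` symmetric and `L i μ = λ_i(P - q (a - μ I)⁻¹ qᵀ)` (the `i`-th
largest eigenvalue), each `L i` is non-increasing on any open interval containing no
eigenvalue of `a` (in particular, on any interval between consecutive eigenvalues of `a`). -/
theorem statement1 {p m : ℕ}
    (a : Matrix (Fin p) (Fin p) ℝ) (P : Matrix (Fin m) (Fin m) ℝ)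
    (q : Matrix (Fin m) (Fin p) ℝ)
    (ha : a.IsHermitian) (hP : P.IsHermitian)
    (c e : ℝ)
    (hno : ∀ μ ∈ Set.Ioo c e, (a - μ • (1 : Matrix (Fin p) (Fin p) ℝ)).det ≠ 0)
    (i : Fin m) :
    AntitoneOn
      (fun μ => ithLargest i
        (P - q * (a - μ • (1 : Matrix (Fin p) (Fin p) ℝ))⁻¹ * qᵀ))
      (Set.Ioo c e) := by
  classical
  set U := (ha.eigenvectorUnitary : Matrix (Fin p) (Fin p) ℝ) with hU
  set ev := ha.eigenvalues with hev
  have hev_not : ∀ k, ev k ∉ Set.Ioo c e := by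
    intro k hk
    refine hno (ev k) hk ?_
    rw [det_sub_smul ha, Finset.prod_eq_zero (Finset.mem_univ k) (sub_self (ev k))]
    ring
  have hne : ∀ μ ∈ Set.Ioo c e, ∀ k, ev k - μ ≠ 0 := by
    intro μ hμ k h
    exact hev_not k (by rw [sub_eq_zero] at h; rw [h]; exact hμ)
  have hsub : ∀ μ : ℝ, (a - μ • (1 : Matrix (Fin p) (Fin p) ℝ)).IsHermitian := by
    intro μ
    exact ha.sub (by simp [Matrix.IsHermitian, conjTranspose_smul])
  have hherm : ∀ μ : ℝ,
      (P - q * (a - μ • (1 : Matrix (Fin p) (Fin p) ℝ))⁻¹ * qᵀ).IsHermitian := by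
    intro μ
    refine hP.sub ?_
    rw [← conjTranspose_eq_transpose_of_trivial q]
    exact isHermitian_mul_mul_conjTranspose q (hsub μ).inv
  intro μ1 hμ1 μ2 hμ2 h12
  have hd : ∀ k, (0:ℝ) ≤ (ev k - μ2)⁻¹ - (ev k - μ1)⁻¹ := by
    intro k
    have hk := hev_not k
    simp only [Set.mem_Ioo, not_and, not_lt] at hk
    rcases le_or_gt (ev k) c with hc | hc
    · have ha1 : ev k - μ1 < 0 := by
        have := hμ1.1; linarith
      have ha2 : ev k - μ2 < 0 := by
        have := hμ2.1; linarith
      rw [inv_sub_inv (ne_of_lt ha2) (ne_of_lt ha1)]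
      apply div_nonneg (by linarith)
      nlinarith
    · have he := hk hc
      have ha2 : 0 < ev k - μ2 := by
        have := hμ2.2; linarith
      have ha1 : 0 < ev k - μ1 := by linarith
      rw [inv_sub_inv (ne_of_gt ha2) (ne_of_gt ha1)]
      apply div_nonneg (by linarith)
      nlinarith
  have h1 := inv_sub_smul ha (hne μ1 hμ1)
  have h2 := inv_sub_smul ha (hne μ2 hμ2)
  set D1 := diagonal (fun k => (ev k - μ1)⁻¹) with hD1
  set D2 := diagonal (fun k => (ev k - μ2)⁻¹) with hD2
  have key : (P - q * (a - μ1 • (1 : Matrix (Fin p) (Fin p) ℝ))⁻¹ * qᵀ)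
        - (P - q * (a - μ2 • (1 : Matrix (Fin p) (Fin p) ℝ))⁻¹ * qᵀ)
      = (q * U) * diagonal (fun k => (ev k - μ2)⁻¹ - (ev k - μ1)⁻¹) * (q * U)ᴴ := by
    have e1 : (q * U)ᴴ = star U * qᵀ := by
      rw [conjTranspose_mul, conjTranspose_eq_transpose_of_trivial q,
        Matrix.star_eq_conjTranspose]
    have e2 : diagonal (fun k => (ev k - μ2)⁻¹ - (ev k - μ1)⁻¹) = D2 - D1 :=
      (diagonal_sub _ _).symm
    rw [e1, e2, sub_sub_sub_cancel_left, h1, h2, ← Matrix.sub_mul, ← Matrix.mul_sub,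
      ← Matrix.sub_mul, ← Matrix.mul_sub]
    simp only [Matrix.mul_assoc]
    rfl
  have hPSD : ((P - q * (a - μ1 • (1 : Matrix (Fin p) (Fin p) ℝ))⁻¹ * qᵀ)
        - (P - q * (a - μ2 • (1 : Matrix (Fin p) (Fin p) ℝ))⁻¹ * qᵀ)).PosSemidef := by
    rw [key]
    exact (Matrix.PosSemidef.diagonal (fun k => hd k)).mul_mul_conjTranspose_same (q * U)
  simp only [ithLargest, dif_pos (hherm μ1), dif_pos (hherm μ2)]
  exact eig_mono (hherm μ2) (hherm μ1) hPSD i.rev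
end

section
/- Let $P \in \mathbb{R}^{m\times m}$ be symmetric, $a \in \mathbb{R}^{p\times p}$ symmetric with spectral decomposition $a = \sum_k \lambda_k^a v_k^a (v_k^a)^\top$, and $q \in \mathbb{R}^{m\times p}$ with $q v_i^a \neq 0$ for all eigenvectors $v_i^a$. Then for each $i \in [p]$, $\lim_{\mu \to (\lambda_i^a)^+} \lambda_1\big(P - q(a-\mu I_p)^{-1}q^\top\big) = +\infty$, and for each fixed $j$, $\lim_{\mu \to +\infty} \lambda_j\big(P - q(a-\mu I_p)^{-1}q^\top\big) = \lambda_j(P)$. -/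
open Matrix Filter

open Module

lemma ithLargest_eq {n : ℕ} (i : Fin n) {M : Matrix (Fin n) (Fin n) ℝ} (hM : M.IsHermitian) :
    ithLargest i M = hM.eigenvalues (Tuple.sort hM.eigenvalues i.rev) := dif_pos hM

lemma dotProduct_diag_form {m n : ℕ} (B : Matrix (Fin m) (Fin n) ℝ) (d : Fin n → ℝ) (x : Fin m → ℝ) :
    x ⬝ᵥ (B * diagonal d * Bᵀ) *ᵥ x = ∑ k, d k * ((Bᵀ *ᵥ x) k)^2 := by
  rw [← mulVec_mulVec, ← mulVec_mulVec, dotProduct_mulVec]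
  have h1 : x ᵥ* B = Bᵀ *ᵥ x := by rw [← vecMul_transpose, transpose_transpose]
  rw [h1]
  simp [dotProduct, mulVec_diagonal, pow_two]
  ring_nf
  exact Finset.sum_congr rfl fun k _ => by ring

section herm
variable {n : ℕ} {M : Matrix (Fin n) (Fin n) ℝ} (hM : M.IsHermitian)

lemma star_unitary_eq : (star (hM.eigenvectorUnitary : Matrix (Fin n) (Fin n) ℝ))
    = (hM.eigenvectorUnitary : Matrix (Fin n) (Fin n) ℝ)ᵀ := by
  rw [Matrix.star_eq_conjTranspose, conjTranspose_eq_transpose_of_trivial]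

lemma spectral_real : M = (hM.eigenvectorUnitary : Matrix (Fin n) (Fin n) ℝ) *
    diagonal hM.eigenvalues * (hM.eigenvectorUnitary : Matrix (Fin n) (Fin n) ℝ)ᵀ := by
  rw [← star_unitary_eq hM]; simpa using hM.spectral_theorem

lemma UUt : (hM.eigenvectorUnitary : Matrix (Fin n) (Fin n) ℝ) *
    (hM.eigenvectorUnitary : Matrix (Fin n) (Fin n) ℝ)ᵀ = 1 := by
  rw [← star_unitary_eq hM]
  exact (Matrix.mem_unitaryGroup_iff).mp hM.eigenvectorUnitary.2

lemma UtU : (hM.eigenvectorUnitary : Matrix (Fin n) (Fin n) ℝ)ᵀ *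
    (hM.eigenvectorUnitary : Matrix (Fin n) (Fin n) ℝ) = 1 := by
  rw [← star_unitary_eq hM]
  exact (Matrix.mem_unitaryGroup_iff').mp hM.eigenvectorUnitary.2

/-- quadratic form in eigencoordinates -/
lemma quadform_eq : ∀ x : Fin n → ℝ, x ⬝ᵥ M *ᵥ x
    = ∑ k, hM.eigenvalues k * (((hM.eigenvectorUnitary : Matrix (Fin n) (Fin n) ℝ)ᵀ *ᵥ x) k)^2 := by
  intro x
  conv_lhs => rw [spectral_real hM]
  exact dotProduct_diag_form _ _ x

lemma dot_self_eq : ∀ x : Fin n → ℝ, x ⬝ᵥ x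
    = ∑ k, (((hM.eigenvectorUnitary : Matrix (Fin n) (Fin n) ℝ)ᵀ *ᵥ x) k)^2 := by
  intro x
  have h : (hM.eigenvectorUnitary : Matrix (Fin n) (Fin n) ℝ) * diagonal (fun _ => (1:ℝ)) *
      (hM.eigenvectorUnitary : Matrix (Fin n) (Fin n) ℝ)ᵀ = 1 := by
    have : diagonal (fun _ => (1:ℝ)) = (1 : Matrix (Fin n) (Fin n) ℝ) := diagonal_one
    rw [this, mul_one]; exact UUt hM
  have h2 := dotProduct_diag_form (hM.eigenvectorUnitary : Matrix (Fin n) (Fin n) ℝ) (fun _ => (1:ℝ)) x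
  rw [h, one_mulVec] at h2
  simpa using h2
end herm

/-- functions whose `C`-coordinates vanish off `s` -/
noncomputable def coordSub {n : ℕ} (C : Matrix (Fin n) (Fin n) ℝ) (s : Finset (Fin n)) :
    Submodule ℝ (Fin n → ℝ) :=
  LinearMap.ker ((LinearMap.funLeft ℝ ℝ (Subtype.val : {k // k ∉ s} → Fin n)).comp
    (Matrix.mulVecLin C))

lemma mem_coordSub {n : ℕ} {C : Matrix (Fin n) (Fin n) ℝ} {s : Finset (Fin n)} {x : Fin n → ℝ} :
    x ∈ coordSub C s ↔ ∀ k ∉ s, (C *ᵥ x) k = 0 := by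
  simp only [coordSub, LinearMap.mem_ker, LinearMap.comp_apply, Matrix.mulVecLin_apply]
  constructor
  · intro h k hk
    exact congrFun h ⟨k, hk⟩
  · intro h
    funext k
    exact h k.1 k.2

lemma card_le_finrank_coordSub {n : ℕ} (C : Matrix (Fin n) (Fin n) ℝ) (s : Finset (Fin n)) :
    s.card ≤ finrank ℝ (coordSub C s) := by
  classical
  set φ := (LinearMap.funLeft ℝ ℝ (Subtype.val : {k // k ∉ s} → Fin n)).comp
    (Matrix.mulVecLin C)
  have h1 := LinearMap.finrank_range_add_finrank_ker φ
  have h2 : finrank ℝ (LinearMap.range φ) ≤ finrank ℝ ({k // k ∉ s} → ℝ) :=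
    Submodule.finrank_le _
  have h3 : finrank ℝ ({k // k ∉ s} → ℝ) = Fintype.card {k // k ∉ s} :=
    Module.finrank_fintype_fun_eq_card ℝ
  have h4 : Fintype.card {k // k ∉ s} = n - s.card := by
    have e : {k // k ∉ s} ≃ {k : Fin n // k ∈ sᶜ} := Equiv.subtypeEquivRight (by simp)
    rw [Fintype.card_congr e, Fintype.card_coe, Finset.card_compl, Fintype.card_fin]
  have h5 : finrank ℝ (Fin n → ℝ) = n := by
    rw [Module.finrank_fintype_fun_eq_card, Fintype.card_fin]
  have h6 : s.card ≤ n := by simpa using s.card_le_univ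
  have : finrank ℝ (coordSub C s) = finrank ℝ (LinearMap.ker φ) := rfl
  omega

lemma dot_self_nonneg {n : ℕ} (x : Fin n → ℝ) : 0 ≤ x ⬝ᵥ x :=
  Finset.sum_nonneg fun i _ => mul_self_nonneg (x i)

lemma dot_self_pos {n : ℕ} {x : Fin n → ℝ} (hx : x ≠ 0) : 0 < x ⬝ᵥ x := by
  obtain ⟨i, hi⟩ := Function.ne_iff.mp hx
  exact Finset.sum_pos' (fun j _ => mul_self_nonneg (x j))
    ⟨i, Finset.mem_univ i, mul_self_pos.mpr hi⟩

section bounds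
variable {n : ℕ} {M : Matrix (Fin n) (Fin n) ℝ} (hM : M.IsHermitian) (s : Finset (Fin n))
  {t : ℝ} {x : Fin n → ℝ}

lemma quadform_ge_of (ht : ∀ k ∈ s, t ≤ hM.eigenvalues k)
    (hx : x ∈ coordSub (hM.eigenvectorUnitary : Matrix (Fin n) (Fin n) ℝ)ᵀ s) :
    t * (x ⬝ᵥ x) ≤ x ⬝ᵥ M *ᵥ x := by
  have hc := mem_coordSub.mp hx
  rw [quadform_eq hM x, dot_self_eq hM x]
  set c := (hM.eigenvectorUnitary : Matrix (Fin n) (Fin n) ℝ)ᵀ *ᵥ x with hcdef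
  rw [Finset.mul_sum]
  rw [← Finset.sum_subset (Finset.subset_univ s) (fun k _ hk => by rw [hc k hk]; ring),
      ← Finset.sum_subset (Finset.subset_univ s) (fun k _ hk => by rw [hc k hk]; ring)]
  exact Finset.sum_le_sum fun k hk => mul_le_mul_of_nonneg_right (ht k hk) (sq_nonneg _)

lemma quadform_le_of (ht : ∀ k ∈ s, hM.eigenvalues k ≤ t)
    (hx : x ∈ coordSub (hM.eigenvectorUnitary : Matrix (Fin n) (Fin n) ℝ)ᵀ s) :
    x ⬝ᵥ M *ᵥ x ≤ t * (x ⬝ᵥ x) := by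
  have hc := mem_coordSub.mp hx
  rw [quadform_eq hM x, dot_self_eq hM x]
  set c := (hM.eigenvectorUnitary : Matrix (Fin n) (Fin n) ℝ)ᵀ *ᵥ x with hcdef
  rw [Finset.mul_sum]
  rw [← Finset.sum_subset (Finset.subset_univ s) (fun k _ hk => by rw [hc k hk]; ring),
      ← Finset.sum_subset (Finset.subset_univ s) (fun k _ hk => by rw [hc k hk]; ring)]
  exact Finset.sum_le_sum fun k hk => mul_le_mul_of_nonneg_right (ht k hk) (sq_nonneg _)

end bounds

lemma weyl_le {n : ℕ} {A E : Matrix (Fin n) (Fin n) ℝ} (hA : A.IsHermitian) (hE : E.IsHermitian)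
    {ε : ℝ} (hb : ∀ x : Fin n → ℝ, x ⬝ᵥ E *ᵥ x ≤ ε * (x ⬝ᵥ x)) (j : Fin n) :
    ithLargest j (A + E) ≤ ithLargest j A + ε := by
  classical
  have hAE : (A + E).IsHermitian := hA.add hE
  set σ₁ := Tuple.sort hAE.eigenvalues with hσ₁
  set σ₂ := Tuple.sort hA.eigenvalues with hσ₂
  set sTop := (Finset.Iic j).image (fun i => σ₁ i.rev) with hsTop
  set sBot := (Finset.Ici j).image (fun i => σ₂ i.rev) with hsBot
  have hinj1 : Function.Injective (fun i : Fin n => σ₁ i.rev) :=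
    σ₁.injective.comp Fin.rev_injective
  have hinj2 : Function.Injective (fun i : Fin n => σ₂ i.rev) :=
    σ₂.injective.comp Fin.rev_injective
  have hcard1 : sTop.card = j.1 + 1 := by
    rw [hsTop, Finset.card_image_of_injective _ hinj1, Fin.card_Iic]
  have hcard2 : sBot.card = n - j.1 := by
    rw [hsBot, Finset.card_image_of_injective _ hinj2, Fin.card_Ici]
  set S := coordSub (hAE.eigenvectorUnitary : Matrix (Fin n) (Fin n) ℝ)ᵀ sTop with hS
  set T := coordSub (hA.eigenvectorUnitary : Matrix (Fin n) (Fin n) ℝ)ᵀ sBot with hT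
  have hfS : j.1 + 1 ≤ finrank ℝ S := hcard1 ▸ card_le_finrank_coordSub _ _
  have hfT : n - j.1 ≤ finrank ℝ T := hcard2 ▸ card_le_finrank_coordSub _ _
  have hsup : finrank ℝ (S ⊔ T : Submodule ℝ (Fin n → ℝ)) ≤ n := by
    have := Submodule.finrank_le (S ⊔ T)
    rwa [Module.finrank_fintype_fun_eq_card, Fintype.card_fin] at this
  have hdim := Submodule.finrank_sup_add_finrank_inf_eq S T
  have hj : j.1 < n := j.isLt
  have hpos : 0 < finrank ℝ (S ⊓ T : Submodule ℝ (Fin n → ℝ)) := by omega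
  obtain ⟨⟨x, hxST⟩, hx0⟩ := Module.finrank_pos_iff_exists_ne_zero.mp hpos
  have hx : x ≠ 0 := fun h => hx0 (Subtype.ext h)
  have hxS : x ∈ S := hxST.1
  have hxT : x ∈ T := hxST.2
  -- eigenvalue bounds on the index sets
  have hbound1 : ∀ k ∈ sTop, ithLargest j (A + E) ≤ hAE.eigenvalues k := by
    intro k hk
    obtain ⟨i, hi, rfl⟩ := Finset.mem_image.mp hk
    rw [ithLargest_eq j hAE]
    exact Tuple.monotone_sort hAE.eigenvalues (Fin.rev_le_rev.mpr (Finset.mem_Iic.mp hi))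
  have hbound2 : ∀ k ∈ sBot, hA.eigenvalues k ≤ ithLargest j A := by
    intro k hk
    obtain ⟨i, hi, rfl⟩ := Finset.mem_image.mp hk
    rw [ithLargest_eq j hA]
    exact Tuple.monotone_sort hA.eigenvalues (Fin.rev_le_rev.mpr (Finset.mem_Ici.mp hi))
  have h1 : ithLargest j (A + E) * (x ⬝ᵥ x) ≤ x ⬝ᵥ (A + E) *ᵥ x :=
    quadform_ge_of hAE sTop hbound1 hxS
  have h2 : x ⬝ᵥ A *ᵥ x ≤ ithLargest j A * (x ⬝ᵥ x) :=
    quadform_le_of hA sBot hbound2 hxT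
  have h3 : x ⬝ᵥ (A + E) *ᵥ x = x ⬝ᵥ A *ᵥ x + x ⬝ᵥ E *ᵥ x := by
    rw [add_mulVec, dotProduct_add]
  have hxx : 0 < x ⬝ᵥ x := dot_self_pos hx
  have : ithLargest j (A + E) * (x ⬝ᵥ x) ≤ (ithLargest j A + ε) * (x ⬝ᵥ x) := by
    calc ithLargest j (A + E) * (x ⬝ᵥ x) ≤ x ⬝ᵥ A *ᵥ x + x ⬝ᵥ E *ᵥ x := h3 ▸ h1
    _ ≤ ithLargest j A * (x ⬝ᵥ x) + ε * (x ⬝ᵥ x) := add_le_add h2 (hb x)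
    _ = (ithLargest j A + ε) * (x ⬝ᵥ x) := by ring
  exact le_of_mul_le_mul_right this hxx

lemma ithLargest_anti {n : ℕ} {i j : Fin n} (hij : i ≤ j) {M : Matrix (Fin n) (Fin n) ℝ}
    (hM : M.IsHermitian) : ithLargest j M ≤ ithLargest i M := by
  rw [ithLargest_eq i hM, ithLargest_eq j hM]
  exact Tuple.monotone_sort hM.eigenvalues (Fin.rev_le_rev.mpr hij)

lemma le_ithLargest_zero {n : ℕ} (hn : 0 < n) {M : Matrix (Fin n) (Fin n) ℝ}
    (hM : M.IsHermitian) (k : Fin n) : hM.eigenvalues k ≤ ithLargest ⟨0, hn⟩ M := by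
  rw [ithLargest_eq _ hM]
  have hk : k = Tuple.sort hM.eigenvalues ((Tuple.sort hM.eigenvalues).symm k) := by simp
  rw [hk]
  refine Tuple.monotone_sort hM.eigenvalues ?_
  have := ((Tuple.sort hM.eigenvalues).symm k).isLt
  simp only [Fin.le_def, Fin.val_rev]
  omega

lemma rayleigh_le {n : ℕ} (hn : 0 < n) {M : Matrix (Fin n) (Fin n) ℝ} (hM : M.IsHermitian)
    (x : Fin n → ℝ) : x ⬝ᵥ M *ᵥ x ≤ ithLargest ⟨0, hn⟩ M * (x ⬝ᵥ x) := by
  rw [quadform_eq hM x, dot_self_eq hM x, Finset.mul_sum]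
  exact Finset.sum_le_sum fun k _ =>
    mul_le_mul_of_nonneg_right (le_ithLargest_zero hn hM k) (sq_nonneg _)

section resolvent
variable {p : ℕ} {a : Matrix (Fin p) (Fin p) ℝ} (ha : a.IsHermitian)

lemma smul_one_diag {p : ℕ} (μ : ℝ) :
    μ • (1 : Matrix (Fin p) (Fin p) ℝ) = diagonal (fun _ => μ) := by
  ext i j
  by_cases h : i = j <;> simp [Matrix.one_apply, Matrix.diagonal_apply, h]

lemma sub_smul_one_eq (μ : ℝ) :
    a - μ • (1 : Matrix (Fin p) (Fin p) ℝ)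
      = (ha.eigenvectorUnitary : Matrix (Fin p) (Fin p) ℝ) *
        diagonal (fun k => ha.eigenvalues k - μ) *
        (ha.eigenvectorUnitary : Matrix (Fin p) (Fin p) ℝ)ᵀ := by
  have hd : diagonal (fun k => ha.eigenvalues k - μ)
      = diagonal ha.eigenvalues - diagonal (fun _ => μ) := by
    rw [diagonal_sub]
  rw [hd, mul_sub, sub_mul, ← spectral_real ha]
  congr 1
  rw [← smul_one_diag, Matrix.mul_smul, Matrix.smul_mul, mul_one, UUt ha]

lemma left_inv_sub_smul {μ : ℝ} (hμ : ∀ k, ha.eigenvalues k ≠ μ) :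
    ((ha.eigenvectorUnitary : Matrix (Fin p) (Fin p) ℝ) *
        diagonal (fun k => (ha.eigenvalues k - μ)⁻¹) *
        (ha.eigenvectorUnitary : Matrix (Fin p) (Fin p) ℝ)ᵀ) *
      (a - μ • (1 : Matrix (Fin p) (Fin p) ℝ)) = 1 := by
  rw [sub_smul_one_eq ha μ]
  calc ((ha.eigenvectorUnitary : Matrix (Fin p) (Fin p) ℝ) *
        diagonal (fun k => (ha.eigenvalues k - μ)⁻¹) *
        (ha.eigenvectorUnitary : Matrix (Fin p) (Fin p) ℝ)ᵀ) *
      ((ha.eigenvectorUnitary : Matrix (Fin p) (Fin p) ℝ) *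
        diagonal (fun k => ha.eigenvalues k - μ) *
        (ha.eigenvectorUnitary : Matrix (Fin p) (Fin p) ℝ)ᵀ)
      = (ha.eigenvectorUnitary : Matrix (Fin p) (Fin p) ℝ) *
        diagonal (fun k => (ha.eigenvalues k - μ)⁻¹) *
        ((ha.eigenvectorUnitary : Matrix (Fin p) (Fin p) ℝ)ᵀ *
         (ha.eigenvectorUnitary : Matrix (Fin p) (Fin p) ℝ)) *
        diagonal (fun k => ha.eigenvalues k - μ) *
        (ha.eigenvectorUnitary : Matrix (Fin p) (Fin p) ℝ)ᵀ := by
        simp only [Matrix.mul_assoc]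
    _ = 1 := by
        rw [UtU ha, mul_one, Matrix.mul_assoc _ (diagonal _) (diagonal _),
          diagonal_mul_diagonal]
        have : (fun k => (ha.eigenvalues k - μ)⁻¹ * (ha.eigenvalues k - μ))
            = fun _ => (1:ℝ) := by
          funext k
          exact inv_mul_cancel₀ (sub_ne_zero.mpr (hμ k))
        rw [this, diagonal_one, mul_one, UUt ha]

lemma resolvent_eq {μ : ℝ} (hμ : ∀ k, ha.eigenvalues k ≠ μ) :
    (a - μ • (1 : Matrix (Fin p) (Fin p) ℝ))⁻¹
      = (ha.eigenvectorUnitary : Matrix (Fin p) (Fin p) ℝ) *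
        diagonal (fun k => (ha.eigenvalues k - μ)⁻¹) *
        (ha.eigenvectorUnitary : Matrix (Fin p) (Fin p) ℝ)ᵀ :=
  Matrix.inv_eq_left_inv (left_inv_sub_smul ha hμ)

end resolvent

section main
variable {p m : ℕ} {a : Matrix (Fin p) (Fin p) ℝ} (ha : a.IsHermitian)
  {P : Matrix (Fin m) (Fin m) ℝ} (hP : P.IsHermitian) (q : Matrix (Fin m) (Fin p) ℝ)

include ha hP in
lemma Mmu_herm (μ : ℝ) :
    (P - q * (a - μ • (1 : Matrix (Fin p) (Fin p) ℝ))⁻¹ * qᵀ).IsHermitian := by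
  have haT : aᵀ = a := by rw [← conjTranspose_eq_transpose_of_trivial]; exact ha
  have hPT : Pᵀ = P := by rw [← conjTranspose_eq_transpose_of_trivial]; exact hP
  show _ = _
  rw [conjTranspose_eq_transpose_of_trivial]
  rw [transpose_sub, hPT, transpose_mul, transpose_mul, transpose_transpose,
    transpose_nonsing_inv, transpose_sub, haT, transpose_smul, transpose_one,
    Matrix.mul_assoc]

lemma quadform_Mmu {μ : ℝ} (hμ : ∀ k, ha.eigenvalues k ≠ μ) (x : Fin m → ℝ) :
    x ⬝ᵥ (P - q * (a - μ • (1 : Matrix (Fin p) (Fin p) ℝ))⁻¹ * qᵀ) *ᵥ x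
      = x ⬝ᵥ P *ᵥ x - ∑ k, (ha.eigenvalues k - μ)⁻¹ *
          (((q * (ha.eigenvectorUnitary : Matrix (Fin p) (Fin p) ℝ))ᵀ *ᵥ x) k)^2 := by
  rw [sub_mulVec, dotProduct_sub, resolvent_eq ha hμ]
  congr 1
  have h : q * ((ha.eigenvectorUnitary : Matrix (Fin p) (Fin p) ℝ) *
        diagonal (fun k => (ha.eigenvalues k - μ)⁻¹) *
        (ha.eigenvectorUnitary : Matrix (Fin p) (Fin p) ℝ)ᵀ) * qᵀ
      = (q * (ha.eigenvectorUnitary : Matrix (Fin p) (Fin p) ℝ)) *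
        diagonal (fun k => (ha.eigenvalues k - μ)⁻¹) *
        (q * (ha.eigenvectorUnitary : Matrix (Fin p) (Fin p) ℝ))ᵀ := by
    rw [transpose_mul]
    simp only [Matrix.mul_assoc]
  rw [h, dotProduct_diag_form]

lemma sumsq_bound {m' p' : ℕ} (B : Matrix (Fin m') (Fin p') ℝ) (x : Fin m' → ℝ) :
    ∑ k, ((Bᵀ *ᵥ x) k)^2 ≤ (∑ k, ∑ i, (B i k)^2) * (x ⬝ᵥ x) := by
  have hx : x ⬝ᵥ x = ∑ i, (x i)^2 := by
    simp [dotProduct, pow_two]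
  rw [hx, Finset.sum_mul]
  refine Finset.sum_le_sum fun k _ => ?_
  have := Finset.sum_mul_sq_le_sq_mul_sq Finset.univ (fun i => B i k) x
  calc ((Bᵀ *ᵥ x) k)^2 = (∑ i, B i k * x i)^2 := by simp [mulVec, dotProduct, transpose]
    _ ≤ (∑ i, (B i k)^2) * ∑ i, (x i)^2 := this

end main

open Filter

/-- If `q v ≠ 0` for every eigenvector `v` of the symmetric matrix `a`, then for
any eigenvalue `lam` of `a`, `λ₁(P - q(a-μI)⁻¹qᵀ) → +∞` as `μ ↓ lam`; and for each fixed `j`,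
`λ_j(P - q(a-μI)⁻¹qᵀ) → λ_j(P)` as `μ → +∞`. -/
theorem statement2 {p m : ℕ} (hm : 0 < m)
    (a : Matrix (Fin p) (Fin p) ℝ) (P : Matrix (Fin m) (Fin m) ℝ)
    (q : Matrix (Fin m) (Fin p) ℝ)
    (ha : a.IsHermitian) (hP : P.IsHermitian)
    (hq : ∀ (v : Fin p → ℝ) (c : ℝ), v ≠ 0 → a.mulVec v = c • v → q.mulVec v ≠ 0)
    (lam : ℝ) (hlam : ∃ v : Fin p → ℝ, v ≠ 0 ∧ a.mulVec v = lam • v) :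
    Tendsto
      (fun μ : ℝ => ithLargest (⟨0, hm⟩ : Fin m)
        (P - q * (a - μ • (1 : Matrix (Fin p) (Fin p) ℝ))⁻¹ * qᵀ))
      (nhdsWithin lam (Set.Ioi lam)) atTop
    ∧ ∀ j : Fin m,
      Tendsto
        (fun μ : ℝ => ithLargest j
          (P - q * (a - μ • (1 : Matrix (Fin p) (Fin p) ℝ))⁻¹ * qᵀ))
        atTop (nhds (ithLargest j P)) := by
  have hp : 0 < p := by
    obtain ⟨v, hv, -⟩ := hlam
    rcases Nat.eq_zero_or_pos p with h | h
    · subst h; exact absurd (Subsingleton.elim v 0) hv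
    · exact h
  have : Nonempty (Fin p) := ⟨⟨0, hp⟩⟩
  set U : Matrix (Fin p) (Fin p) ℝ := (ha.eigenvectorUnitary : Matrix (Fin p) (Fin p) ℝ) with hU
  set B : Matrix (Fin m) (Fin p) ℝ := q * U with hB
  constructor
  · -- part 1
    have hk0ex : ∃ k₀, ha.eigenvalues k₀ = lam := by
      by_contra hcon
      push_neg at hcon
      obtain ⟨v, hv0, hav⟩ := hlam
      have hNl := left_inv_sub_smul ha (μ := lam) hcon
      have h0 : (a - lam • (1 : Matrix (Fin p) (Fin p) ℝ)) *ᵥ v = 0 := by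
        rw [sub_mulVec, hav, Matrix.smul_mulVec, one_mulVec, sub_self]
      have hv : v = 0 := by
        have h1 : ((U * diagonal (fun k => (ha.eigenvalues k - lam)⁻¹) * Uᵀ) *
            (a - lam • (1 : Matrix (Fin p) (Fin p) ℝ))) *ᵥ v = v := by
          rw [hNl, one_mulVec]
        rw [← mulVec_mulVec, h0, mulVec_zero] at h1
        exact h1.symm
      exact hv0 hv
    obtain ⟨k₀, hk₀⟩ := hk0ex
    set v : Fin p → ℝ := fun i => U i k₀ with hvdef
    have hvsingle : v = U *ᵥ Pi.single k₀ 1 := by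
      funext i
      rw [Matrix.mulVec_single]
      simp [hvdef]
    have hav : a *ᵥ v = lam • v := by
      have hsp : a * U = U * diagonal ha.eigenvalues := by
        conv_lhs => rw [spectral_real ha]
        rw [Matrix.mul_assoc (U * diagonal ha.eigenvalues), UtU ha, mul_one]
      calc a *ᵥ v = a *ᵥ (U *ᵥ Pi.single k₀ 1) := by rw [← hvsingle]
        _ = (a * U) *ᵥ Pi.single k₀ 1 := by rw [mulVec_mulVec]
        _ = U *ᵥ (diagonal ha.eigenvalues *ᵥ Pi.single k₀ 1) := by
            rw [hsp, ← mulVec_mulVec]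
        _ = U *ᵥ (ha.eigenvalues k₀ • (Pi.single k₀ 1 : Fin p → ℝ)) := by
            have hps : (Pi.single k₀ (ha.eigenvalues k₀ * 1) : Fin p → ℝ)
                = ha.eigenvalues k₀ • (Pi.single k₀ 1 : Fin p → ℝ) := by
              funext i
              by_cases h : i = k₀ <;> simp [Pi.single_apply, h]
            rw [Matrix.diagonal_mulVec_single, hps]
        _ = lam • v := by rw [Matrix.mulVec_smul, ← hvsingle, hk₀]
    have hv0 : v ≠ 0 := by
      intro hzero
      have h1 : (Uᵀ * U) k₀ k₀ = 1 := by rw [UtU ha]; simp [Matrix.one_apply]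
      rw [Matrix.mul_apply] at h1
      have hz : ∀ i, U i k₀ = 0 := fun i => congrFun hzero i
      simp only [transpose_apply, hz, mul_zero, Finset.sum_const_zero] at h1
      exact zero_ne_one h1
    set x : Fin m → ℝ := q *ᵥ v with hxdef
    have hx0 : x ≠ 0 := hq v lam hv0 hav
    have hxx : 0 < x ⬝ᵥ x := dot_self_pos hx0
    set g : Fin p → ℝ := Bᵀ *ᵥ x with hgdef
    have hgk0 : g k₀ = x ⬝ᵥ x := by
      rw [hgdef]
      simp only [mulVec, dotProduct, transpose_apply, hB, Matrix.mul_apply, hxdef, hvdef]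
    have hgpos : 0 < g k₀ := by rw [hgk0]; exact hxx
    have hev : ∀ᶠ μ in nhdsWithin lam (Set.Ioi lam),
        lam < μ ∧ ∀ k, ha.eigenvalues k ≠ μ := by
      have h1 : ∀ᶠ μ in nhdsWithin lam (Set.Ioi lam), lam < μ := eventually_mem_nhdsWithin
      refine h1.and (eventually_all.mpr fun k => ?_)
      rcases le_or_gt (ha.eigenvalues k) lam with h | h
      · exact h1.mono fun μ hμ => ne_of_lt (lt_of_le_of_lt h hμ)
      · exact ((eventually_lt_nhds h).filter_mono nhdsWithin_le_nhds).mono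
          fun μ hμ => ne_of_gt hμ
    set D : ℝ := x ⬝ᵥ P *ᵥ x with hDdef
    classical
    set rest : ℝ → ℝ := fun μ =>
      ∑ k ∈ Finset.univ.filter (fun k => ¬ (ha.eigenvalues k = lam)),
        (μ - ha.eigenvalues k)⁻¹ * (g k)^2 with hrest
    set ℓ : ℝ → ℝ := fun μ =>
      (D + (μ - lam)⁻¹ * (g k₀)^2 + rest μ) * (x ⬝ᵥ x)⁻¹ with hℓdef
    have hℓtop : Tendsto ℓ (nhdsWithin lam (Set.Ioi lam)) atTop := by
      have t0 : Tendsto (fun μ : ℝ => μ - lam) (nhdsWithin lam (Set.Ioi lam))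
          (nhdsWithin 0 (Set.Ioi 0)) := by
        refine tendsto_nhdsWithin_iff.mpr ⟨?_, ?_⟩
        · have h : Tendsto (fun μ : ℝ => μ - lam) (nhds lam) (nhds (lam - lam)) :=
            (continuous_id.sub continuous_const).tendsto lam
          rw [sub_self] at h
          exact h.mono_left nhdsWithin_le_nhds
        · exact eventually_mem_nhdsWithin.mono fun μ hμ => Set.mem_Ioi.mpr (sub_pos.mpr hμ)
      have t1 : Tendsto (fun μ : ℝ => (μ - lam)⁻¹) (nhdsWithin lam (Set.Ioi lam)) atTop :=
        tendsto_inv_nhdsGT_zero.comp t0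
      have t2 : Tendsto (fun μ : ℝ => (μ - lam)⁻¹ * (g k₀)^2)
          (nhdsWithin lam (Set.Ioi lam)) atTop := t1.atTop_mul_const (pow_pos hgpos 2)
      have t3 : Tendsto rest (nhdsWithin lam (Set.Ioi lam))
          (nhds (∑ k ∈ Finset.univ.filter (fun k => ¬ (ha.eigenvalues k = lam)),
            (lam - ha.eigenvalues k)⁻¹ * (g k)^2)) := by
        rw [hrest]
        refine tendsto_finset_sum _ fun k hk => ?_
        have hne : lam - ha.eigenvalues k ≠ 0 := by
          have := (Finset.mem_filter.mp hk).2
          exact sub_ne_zero.mpr (Ne.symm this)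
        have hc : ContinuousAt (fun μ : ℝ => (μ - ha.eigenvalues k)⁻¹ * (g k)^2) lam := by
          exact ((continuousAt_id.sub continuousAt_const).inv₀ hne).mul continuousAt_const
        exact hc.tendsto.mono_left nhdsWithin_le_nhds
      have t4 : Tendsto (fun μ => D + (μ - lam)⁻¹ * (g k₀)^2)
          (nhdsWithin lam (Set.Ioi lam)) atTop := tendsto_atTop_add_const_left _ D t2
      have t5 : Tendsto (fun μ => D + (μ - lam)⁻¹ * (g k₀)^2 + rest μ)
          (nhdsWithin lam (Set.Ioi lam)) atTop := t4.atTop_add t3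
      exact t5.atTop_mul_const (inv_pos.mpr hxx)
    refine tendsto_atTop_mono' _ ?_ hℓtop
    filter_upwards [hev] with μ hμ
    obtain ⟨hμ1, hμ2⟩ := hμ
    have hray := rayleigh_le hm (Mmu_herm ha hP q μ) x
    have hquad := quadform_Mmu (P := P) ha q hμ2 x
    have h5 : x ⬝ᵥ (P - q * (a - μ • (1 : Matrix (Fin p) (Fin p) ℝ))⁻¹ * qᵀ) *ᵥ x
        = D + ∑ k, (μ - ha.eigenvalues k)⁻¹ * (g k)^2 := by
      rw [hquad, sub_eq_add_neg, ← Finset.sum_neg_distrib]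
      congr 1
      refine Finset.sum_congr rfl fun k _ => ?_
      rw [show μ - ha.eigenvalues k = -(ha.eigenvalues k - μ) by ring, inv_neg]
      ring
    have hsplit : ∑ k, (μ - ha.eigenvalues k)⁻¹ * (g k)^2
        = (∑ k ∈ Finset.univ.filter (fun k => ha.eigenvalues k = lam),
            (μ - ha.eigenvalues k)⁻¹ * (g k)^2) + rest μ := by
      rw [hrest]
      exact (Finset.sum_filter_add_sum_filter_not Finset.univ
        (fun k => ha.eigenvalues k = lam) _).symm
    have hsingle : (μ - lam)⁻¹ * (g k₀)^2
        ≤ ∑ k ∈ Finset.univ.filter (fun k => ha.eigenvalues k = lam),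
            (μ - ha.eigenvalues k)⁻¹ * (g k)^2 := by
      have hmem : k₀ ∈ Finset.univ.filter (fun k => ha.eigenvalues k = lam) := by
        simp [hk₀]
      have := Finset.single_le_sum
        (f := fun k => (μ - ha.eigenvalues k)⁻¹ * (g k)^2) (fun k hk => by
          have hkl := (Finset.mem_filter.mp hk).2
          refine mul_nonneg ?_ (sq_nonneg _)
          rw [hkl]
          exact le_of_lt (inv_pos.mpr (sub_pos.mpr hμ1))) hmem
      simpa only [hk₀] using this
    have hle1 : D + (μ - lam)⁻¹ * (g k₀)^2 + rest μ
        ≤ x ⬝ᵥ (P - q * (a - μ • (1 : Matrix (Fin p) (Fin p) ℝ))⁻¹ * qᵀ) *ᵥ x := by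
      rw [h5, hsplit]
      linarith
    calc ℓ μ = (D + (μ - lam)⁻¹ * (g k₀)^2 + rest μ) * (x ⬝ᵥ x)⁻¹ := rfl
      _ ≤ (x ⬝ᵥ (P - q * (a - μ • (1 : Matrix (Fin p) (Fin p) ℝ))⁻¹ * qᵀ) *ᵥ x)
            * (x ⬝ᵥ x)⁻¹ := by
          exact mul_le_mul_of_nonneg_right hle1 (le_of_lt (inv_pos.mpr hxx))
      _ ≤ ithLargest (⟨0, hm⟩ : Fin m)
            (P - q * (a - μ • (1 : Matrix (Fin p) (Fin p) ℝ))⁻¹ * qᵀ) := by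
          rw [← div_eq_mul_inv]
          exact (div_le_iff₀ hxx).mpr hray
  · -- part 2
    intro j
    set Λ : ℝ := Finset.univ.sup' Finset.univ_nonempty ha.eigenvalues with hΛdef
    have hΛ : ∀ k, ha.eigenvalues k ≤ Λ := fun k =>
      Finset.le_sup' ha.eigenvalues (Finset.mem_univ k)
    set C : ℝ := ∑ k, ∑ i, (B i k)^2 with hCdef
    have hC0 : 0 ≤ C := Finset.sum_nonneg fun k _ => Finset.sum_nonneg fun i _ => sq_nonneg _
    set ε : ℝ → ℝ := fun μ => C * (μ - Λ)⁻¹ with hεdef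
    have hεto : Tendsto ε atTop (nhds 0) := by
      have h1 : Tendsto (fun μ : ℝ => μ - Λ) atTop atTop :=
        tendsto_atTop_add_const_right atTop (-Λ) tendsto_id
      have h2 : Tendsto (fun μ : ℝ => (μ - Λ)⁻¹) atTop (nhds 0) :=
        tendsto_inv_atTop_zero.comp h1
      simpa using h2.const_mul C
    have key : ∀ᶠ μ in atTop,
        ithLargest j P - ε μ ≤ ithLargest j
          (P - q * (a - μ • (1 : Matrix (Fin p) (Fin p) ℝ))⁻¹ * qᵀ) ∧
        ithLargest j
          (P - q * (a - μ • (1 : Matrix (Fin p) (Fin p) ℝ))⁻¹ * qᵀ) ≤ ithLargest j P + ε μ := by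
      filter_upwards [eventually_gt_atTop Λ] with μ hμΛ
      have hμk : ∀ k, ha.eigenvalues k ≠ μ := fun k => ne_of_lt (lt_of_le_of_lt (hΛ k) hμΛ)
      have hsub : 0 < μ - Λ := sub_pos.mpr hμΛ
      have hε0 : 0 ≤ ε μ := mul_nonneg hC0 (le_of_lt (inv_pos.mpr hsub))
      set X : Matrix (Fin m) (Fin m) ℝ := q * (a - μ • (1 : Matrix (Fin p) (Fin p) ℝ))⁻¹ * qᵀ
        with hX
      have hEq : ∀ x : Fin m → ℝ, x ⬝ᵥ (-X) *ᵥ x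
          = ∑ k, (μ - ha.eigenvalues k)⁻¹ * ((Bᵀ *ᵥ x) k)^2 := by
        intro x
        have h1 := quadform_Mmu (P := P) ha q hμk x
        have h2 : x ⬝ᵥ (P - X) *ᵥ x = x ⬝ᵥ P *ᵥ x - x ⬝ᵥ X *ᵥ x := by
          rw [sub_mulVec, dotProduct_sub]
        have h3 : x ⬝ᵥ X *ᵥ x = ∑ k, (ha.eigenvalues k - μ)⁻¹ * ((Bᵀ *ᵥ x) k)^2 := by
          rw [hX] at h2 ⊢
          rw [h2] at h1
          linarith [h1]
        rw [neg_mulVec, dotProduct_neg, h3, ← Finset.sum_neg_distrib]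
        refine Finset.sum_congr rfl fun k _ => ?_
        rw [show μ - ha.eigenvalues k = -(ha.eigenvalues k - μ) by ring, inv_neg]
        ring
      have hnn : ∀ x : Fin m → ℝ, 0 ≤ x ⬝ᵥ (-X) *ᵥ x := by
        intro x
        rw [hEq x]
        refine Finset.sum_nonneg fun k _ => mul_nonneg ?_ (sq_nonneg _)
        exact le_of_lt (inv_pos.mpr (sub_pos.mpr (lt_of_le_of_lt (hΛ k) hμΛ)))
      have hub : ∀ x : Fin m → ℝ, x ⬝ᵥ (-X) *ᵥ x ≤ ε μ * (x ⬝ᵥ x) := by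
        intro x
        rw [hEq x]
        calc ∑ k, (μ - ha.eigenvalues k)⁻¹ * ((Bᵀ *ᵥ x) k)^2
            ≤ ∑ k, (μ - Λ)⁻¹ * ((Bᵀ *ᵥ x) k)^2 := by
              refine Finset.sum_le_sum fun k _ => ?_
              refine mul_le_mul_of_nonneg_right ?_ (sq_nonneg _)
              exact inv_anti₀ hsub (by linarith [hΛ k])
          _ = (μ - Λ)⁻¹ * ∑ k, ((Bᵀ *ᵥ x) k)^2 := by rw [Finset.mul_sum]
          _ ≤ (μ - Λ)⁻¹ * (C * (x ⬝ᵥ x)) := by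
              refine mul_le_mul_of_nonneg_left ?_ (le_of_lt (inv_pos.mpr hsub))
              exact sumsq_bound B x
          _ = ε μ * (x ⬝ᵥ x) := by rw [hεdef]; ring
      have hEherm : (-X).IsHermitian := by
        have h1 := Mmu_herm ha hP q μ
        have h2 := h1.sub hP
        simpa [sub_sub_cancel_left] using h2
      have w1 : ithLargest j (P + -X) ≤ ithLargest j P + ε μ := weyl_le hP hEherm hub j
      have w2 : ithLargest j P ≤ ithLargest j (P + -X) + ε μ := by
        have hneg : ∀ x : Fin m → ℝ, x ⬝ᵥ (- -X) *ᵥ x ≤ ε μ * (x ⬝ᵥ x) := by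
          intro x
          rw [neg_mulVec, dotProduct_neg]
          have := hnn x
          nlinarith [dot_self_nonneg x]
        have := weyl_le (hP.add hEherm) hEherm.neg hneg j
        simpa using this
      have hPE : P - X = P + -X := sub_eq_add_neg P X
      rw [hX] at hPE
      rw [hPE]
      exact ⟨by linarith, by linarith⟩
    refine tendsto_of_tendsto_of_tendsto_of_le_of_le'
      (g := fun μ => ithLargest j P - ε μ) (h := fun μ => ithLargest j P + ε μ)
      ?_ ?_ (key.mono fun μ h => h.1) (key.mono fun μ h => h.2)
    · simpa using tendsto_const_nhds.sub hεto
    · simpa using tendsto_const_nhds.add hεto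
end

section
/- Let $E(y) \in \mathbb{R}^{p\times p}$ be a family of symmetric matrices indexed by a random variable $y$, all having a common orthonormal eigenbasis $u_1, \ldots, u_p$, and define the linear map $\mathcal{F}(M) = \mathbb{E}_y[E(y) M E(y)]$ on symmetric matrices. Then $\sup\{\langle \mathcal{F}(M), M\rangle_F : M \text{ symmetric}, \|M\|_F = 1\} = \max_{\|u\|_2 = 1} \langle \mathcal{F}(uu^\top), uu^\top\rangle_F$, i.e., the supremum is attained at a rank-one matrix. -/
open MeasureTheory Matrix

noncomputable def frobInner {p : ℕ} (A B : Matrix (Fin p) (Fin p) ℝ) : ℝ :=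
  Matrix.trace (Aᵀ * B)

lemma integrable_of_bdd {Y : Type*} [MeasurableSpace Y] {ν : Measure Y} [IsProbabilityMeasure ν]
    {f : Y → ℝ} (hf : Measurable f) (C : ℝ) (hC : ∀ y, |f y| ≤ C) : Integrable f ν :=
  (integrable_const C).mono' hf.aestronglyMeasurable (Filter.Eventually.of_forall fun y => by
    simpa using hC y)

lemma frobInner_sum {p : ℕ} (A B : Matrix (Fin p) (Fin p) ℝ) :
    frobInner A B = ∑ i, ∑ j, A i j * B i j := by
  unfold frobInner
  rw [Matrix.trace]
  simp only [Matrix.diag_apply, Matrix.mul_apply, Matrix.transpose_apply]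
  rw [Finset.sum_comm]

lemma frobInner_conj {p : ℕ} (U A B : Matrix (Fin p) (Fin p) ℝ) (hU : U * Uᵀ = 1) :
    frobInner (Uᵀ * A * U) (Uᵀ * B * U) = frobInner A B := by
  have h2 : Uᵀ * U = 1 := mul_eq_one_comm.mp hU
  unfold frobInner
  have key : (Uᵀ * A * U)ᵀ * (Uᵀ * B * U) = Uᵀ * (Aᵀ * B) * U := by
    simp only [Matrix.transpose_mul, Matrix.transpose_transpose, Matrix.mul_assoc]
    rw [← Matrix.mul_assoc U Uᵀ, hU, Matrix.one_mul]
  rw [key, Matrix.trace_mul_comm, ← Matrix.mul_assoc, hU, Matrix.one_mul]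

/-- If the symmetric matrices `E(y)` share a common orthonormal eigenbasis
`u_1, …, u_p` and `𝓕(M) = E_y[E(y) M E(y)]`, then the supremum of `⟨𝓕(M), M⟩_F` over
symmetric `M` with `‖M‖_F = 1` is attained at a rank-one matrix `v vᵀ` with `‖v‖₂ = 1`. -/
theorem statement12 {Y : Type*} [MeasurableSpace Y] (ν : Measure Y)
    [IsProbabilityMeasure ν] {p : ℕ} (hp : 0 < p)
    (E : Y → Matrix (Fin p) (Fin p) ℝ)
    (hE_meas : ∀ i j, Measurable fun y => E y i j)
    (hE_sym : ∀ y, (E y).IsHermitian)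
    (hE_bdd : ∃ C : ℝ, ∀ y i j, |E y i j| ≤ C)
    (u : Fin p → Fin p → ℝ)
    (horth : ∀ i j, u i ⬝ᵥ u j = if i = j then (1 : ℝ) else 0)
    (c : Y → Fin p → ℝ)
    (heig : ∀ y i, (E y).mulVec (u i) = c y i • u i)
    (F : Matrix (Fin p) (Fin p) ℝ → Matrix (Fin p) (Fin p) ℝ)
    (hF : ∀ (M : Matrix (Fin p) (Fin p) ℝ) (i j : Fin p),
      F M i j = ∫ y, (E y * M * E y) i j ∂ν) :
    ∃ v : Fin p → ℝ, (∑ i, v i ^ 2) = 1 ∧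
      IsGreatest
        {r : ℝ | ∃ M : Matrix (Fin p) (Fin p) ℝ,
          M.IsHermitian ∧ frobInner M M = 1 ∧ r = frobInner (F M) M}
        (frobInner (F (Matrix.vecMulVec v v)) (Matrix.vecMulVec v v)) := by
  classical
  obtain ⟨C₀, hC₀⟩ := hE_bdd
  set C : ℝ := |C₀| with hCdef
  have hC : ∀ y i j, |E y i j| ≤ C := fun y i j => (hC₀ y i j).trans (le_abs_self _)
  have hC0 : 0 ≤ C := abs_nonneg _
  set U : Matrix (Fin p) (Fin p) ℝ := Matrix.of u with hUdef
  have hUUt : U * Uᵀ = 1 := by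
    ext i j
    simpa [Matrix.mul_apply, Matrix.one_apply, dotProduct, hUdef] using horth i j
  have hUtU : Uᵀ * U = 1 := mul_eq_one_comm.mp hUUt
  -- E y = Uᵀ D U
  have hdiag : ∀ y, E y = Uᵀ * Matrix.diagonal (c y) * U := by
    intro y
    have h1 : E y * Uᵀ = Uᵀ * Matrix.diagonal (c y) := by
      ext a b
      have h := congrFun (heig y b) a
      simp only [Matrix.mulVec, dotProduct, Pi.smul_apply, smul_eq_mul] at h
      simp [Matrix.mul_apply, Matrix.diagonal_apply, hUdef, h, mul_ite, mul_zero, Finset.sum_ite_eq', mul_comm]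
    calc E y = E y * (Uᵀ * U) := by rw [hUtU, Matrix.mul_one]
      _ = (E y * Uᵀ) * U := by rw [Matrix.mul_assoc]
      _ = Uᵀ * Matrix.diagonal (c y) * U := by rw [h1]
  -- the eigenvalue functions
  have hc_eq : ∀ i, (fun y => c y i) = fun y => ∑ j, ∑ k, u i j * (E y j k * u i k) := by
    intro i
    funext y
    have h := congrArg (fun w => u i ⬝ᵥ w) (heig y i)
    simp only [dotProduct, Matrix.mulVec, Pi.smul_apply, smul_eq_mul] at h
    have h2 : ∑ j, u i j * ∑ k, E y j k * u i k = c y i * ∑ j, u i j * u i j := by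
      rw [Finset.mul_sum]
      exact h.trans (Finset.sum_congr rfl fun j _ => by ring)
    have h3 : (∑ j, u i j * u i j) = 1 := by simpa [dotProduct] using horth i i
    rw [h3, mul_one] at h2
    rw [← h2]
    congr 1
    funext j
    rw [Finset.mul_sum]
  have hc_meas : ∀ i, Measurable fun y => c y i := by
    intro i
    rw [hc_eq i]
    exact Finset.measurable_sum _ fun j _ => Finset.measurable_sum _ fun k _ =>
      measurable_const.mul ((hE_meas j k).mul measurable_const)
  set D : Fin p → ℝ := fun i => ∑ j, ∑ k, |u i j| * (C * |u i k|) with hDdef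
  have hc_bdd : ∀ y i, |c y i| ≤ D i := by
    intro y i
    have := congrFun (hc_eq i) y
    rw [this]
    refine (Finset.abs_sum_le_sum_abs _ _).trans (Finset.sum_le_sum fun j _ => ?_)
    refine (Finset.abs_sum_le_sum_abs _ _).trans (Finset.sum_le_sum fun k _ => ?_)
    rw [abs_mul, abs_mul]
    exact mul_le_mul_of_nonneg_left
      (mul_le_mul_of_nonneg_right (hC y j k) (abs_nonneg _)) (abs_nonneg _)
  have hD0 : ∀ i, 0 ≤ D i := fun i =>
    Finset.sum_nonneg fun j _ => Finset.sum_nonneg fun k _ => by positivity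
  have hIntc : ∀ i j, Integrable (fun y => c y i * c y j) ν := by
    intro i j
    refine integrable_of_bdd ((hc_meas i).mul (hc_meas j)) (D i * D j) fun y => ?_
    rw [abs_mul]
    exact mul_le_mul (hc_bdd y i) (hc_bdd y j) (abs_nonneg _) (hD0 i)
  set lam : Fin p → ℝ := fun i => ∫ y, c y i * c y i ∂ν with hlamdef
  set μm : Fin p → Fin p → ℝ := fun i j => ∫ y, c y i * c y j ∂ν with hμdef
  obtain ⟨i0, -, hi0⟩ := Finset.exists_max_image (Finset.univ : Finset (Fin p)) lam
    ⟨⟨0, hp⟩, Finset.mem_univ _⟩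
  have hμ_max : ∀ i j, μm i j ≤ lam i0 := by
    intro i j
    have hpt : ∀ y, c y i * c y j ≤ (c y i * c y i + c y j * c y j) / 2 := fun y => by
      nlinarith [sq_nonneg (c y i - c y j)]
    have h1 : μm i j ≤ ∫ y, (c y i * c y i + c y j * c y j) / 2 ∂ν :=
      integral_mono (hIntc i j) (((hIntc i i).add (hIntc j j)).div_const 2)
        hpt
    rw [integral_div, integral_add (hIntc i i) (hIntc j j)] at h1
    have := hi0 i (Finset.mem_univ i)
    have := hi0 j (Finset.mem_univ j)
    simp only [hlamdef] at *
    linarith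
  -- pointwise identity
  have hptwise : ∀ (M : Matrix (Fin p) (Fin p) ℝ) (y : Y),
      frobInner (E y * M * E y) M
        = ∑ i, ∑ j, (c y i * c y j) * ((U * M * Uᵀ) i j)^2 := by
    intro M y
    have hM : M = Uᵀ * (U * M * Uᵀ) * U := by
      calc M = (Uᵀ * U) * M * (Uᵀ * U) := by rw [hUtU]; simp
        _ = Uᵀ * (U * M * Uᵀ) * U := by simp only [Matrix.mul_assoc]
    have hEME : E y * M * E y
        = Uᵀ * (Matrix.diagonal (c y) * (U * M * Uᵀ) * Matrix.diagonal (c y)) * U := by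
      rw [hdiag y]
      simp only [Matrix.mul_assoc]
    calc frobInner (E y * M * E y) M
        = frobInner (Uᵀ * (Matrix.diagonal (c y) * (U * M * Uᵀ) * Matrix.diagonal (c y)) * U)
            (Uᵀ * (U * M * Uᵀ) * U) := by rw [hEME]; exact congrArg (frobInner _) hM
      _ = frobInner (Matrix.diagonal (c y) * (U * M * Uᵀ) * Matrix.diagonal (c y)) (U * M * Uᵀ) :=
          frobInner_conj U _ _ hUUt
      _ = ∑ i, ∑ j, (c y i * c y j) * ((U * M * Uᵀ) i j)^2 := by
          rw [frobInner_sum]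
          refine Finset.sum_congr rfl fun i _ => Finset.sum_congr rfl fun j _ => ?_
          rw [Matrix.mul_diagonal, Matrix.diagonal_mul]
          ring
  -- integrability of entries
  have hentry_eq : ∀ (M : Matrix (Fin p) (Fin p) ℝ) (i j : Fin p),
      (fun y => (E y * M * E y) i j) = fun y => ∑ l, (∑ k, E y i k * M k l) * E y l j := by
    intro M i j; funext y; simp [Matrix.mul_apply]
  have hIntEntry : ∀ (M : Matrix (Fin p) (Fin p) ℝ) (i j : Fin p),
      Integrable (fun y => (E y * M * E y) i j) ν := by
    intro M i j
    have hmeas : Measurable (fun y => (E y * M * E y) i j) := by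
      rw [hentry_eq M i j]
      exact Finset.measurable_sum _ fun l _ =>
        (Finset.measurable_sum _ fun k _ => (hE_meas i k).mul measurable_const).mul (hE_meas l j)
    refine integrable_of_bdd hmeas (∑ l, (∑ k, C * |M k l|) * C) fun y => ?_
    rw [congrFun (hentry_eq M i j) y]
    refine (Finset.abs_sum_le_sum_abs _ _).trans (Finset.sum_le_sum fun l _ => ?_)
    rw [abs_mul]
    refine mul_le_mul ?_ (hC y l j) (abs_nonneg _) (Finset.sum_nonneg fun k _ => by positivity)
    refine (Finset.abs_sum_le_sum_abs _ _).trans (Finset.sum_le_sum fun k _ => ?_)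
    rw [abs_mul]
    exact mul_le_mul_of_nonneg_right (hC y i k) (abs_nonneg _)
  -- the key formula
  have key : ∀ M : Matrix (Fin p) (Fin p) ℝ,
      frobInner (F M) M = ∑ i, ∑ j, μm i j * ((U * M * Uᵀ) i j)^2 := by
    intro M
    calc frobInner (F M) M = ∑ i, ∑ j, (∫ y, (E y * M * E y) i j ∂ν) * M i j := by
          rw [frobInner_sum]
          exact Finset.sum_congr rfl fun i _ => Finset.sum_congr rfl fun j _ => by rw [hF]
      _ = ∑ i, ∑ j, ∫ y, (E y * M * E y) i j * M i j ∂ν := by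
          simp_rw [integral_mul_const]
      _ = ∫ y, ∑ i, ∑ j, (E y * M * E y) i j * M i j ∂ν := by
          rw [integral_finset_sum _ fun i _ => integrable_finset_sum _ fun j _ =>
            (hIntEntry M i j).mul_const (M i j)]
          exact Finset.sum_congr rfl fun i _ =>
            (integral_finset_sum _ fun j _ => (hIntEntry M i j).mul_const _).symm
      _ = ∫ y, ∑ i, ∑ j, (c y i * c y j) * ((U * M * Uᵀ) i j)^2 ∂ν := by
          congr 1; funext y
          exact ((frobInner_sum (E y * M * E y) M).symm).trans (hptwise M y)
      _ = ∑ i, ∑ j, μm i j * ((U * M * Uᵀ) i j)^2 := by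
          rw [integral_finset_sum _ fun i _ => integrable_finset_sum _ fun j _ =>
            (hIntc i j).mul_const _]
          refine Finset.sum_congr rfl fun i _ => ?_
          rw [integral_finset_sum _ fun j _ => (hIntc i j).mul_const _]
          exact Finset.sum_congr rfl fun j _ => integral_mul_const _ _
  -- value at the rank-one maximizer
  have hval : frobInner (F (Matrix.vecMulVec (u i0) (u i0))) (Matrix.vecMulVec (u i0) (u i0))
      = lam i0 := by
    rw [key]
    have hN0 : ∀ i j : Fin p, (U * Matrix.vecMulVec (u i0) (u i0) * Uᵀ) i j
        = (if i = i0 then (1:ℝ) else 0) * (if j = i0 then (1:ℝ) else 0) := by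
      intro i j
      have e1 : (U * Matrix.vecMulVec (u i0) (u i0) * Uᵀ) i j
          = ∑ l, (∑ k, u i k * (u i0 k * u i0 l)) * u j l := by
        simp [Matrix.mul_apply, Matrix.vecMulVec_apply, hUdef]
      have e2 : ∀ l, (∑ k, u i k * (u i0 k * u i0 l)) = (u i ⬝ᵥ u i0) * u i0 l := by
        intro l; rw [dotProduct, Finset.sum_mul]
        exact Finset.sum_congr rfl fun k _ => by ring
      rw [e1]
      simp_rw [e2]
      rw [show (∑ l, (u i ⬝ᵥ u i0) * u i0 l * u j l) = (u i ⬝ᵥ u i0) * (u i0 ⬝ᵥ u j) from by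
        simp only [dotProduct, Finset.mul_sum]
        exact Finset.sum_congr rfl fun l _ => by ring]
      rw [horth, horth]
      congr 1
      simp [eq_comm]
    simp_rw [hN0]
    rw [Finset.sum_eq_single i0]
    · rw [Finset.sum_eq_single i0]
      · simp [hμdef, hlamdef]
      · intro j _ hj; simp [hj]
      · intro h; exact absurd (Finset.mem_univ i0) h
    · intro i _ hi; simp [hi]
    · intro h; exact absurd (Finset.mem_univ i0) h
  refine ⟨u i0, ?_, ?_, ?_⟩
  · simpa [dotProduct, pow_two] using horth i0 i0
  · refine ⟨Matrix.vecMulVec (u i0) (u i0), ?_, ?_, rfl⟩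
    · ext i j
      simp [Matrix.conjTranspose_apply, Matrix.vecMulVec_apply, mul_comm]
    · rw [frobInner_sum]
      have h4 : ∀ i j : Fin p,
          Matrix.vecMulVec (u i0) (u i0) i j * Matrix.vecMulVec (u i0) (u i0) i j
          = (u i0 i * u i0 i) * (u i0 j * u i0 j) := fun i j => by
        simp [Matrix.vecMulVec_apply]; ring
      simp_rw [h4, ← Finset.mul_sum]
      rw [← Finset.sum_mul]
      have h1 : (∑ i, u i0 i * u i0 i) = 1 := by simpa [dotProduct] using horth i0 i0
      rw [h1, one_mul]
  · rintro r ⟨M, -, hM1, rfl⟩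
    rw [key M]
    have hMN : M = Uᵀ * (U * M * Uᵀ) * U := by
      calc M = (Uᵀ * U) * M * (Uᵀ * U) := by rw [hUtU]; simp
        _ = Uᵀ * (U * M * Uᵀ) * U := by simp only [Matrix.mul_assoc]
    have hnorm : ∑ i, ∑ j, ((U * M * Uᵀ) i j)^2 = 1 := by
      have h2 : frobInner M M = frobInner (U * M * Uᵀ) (U * M * Uᵀ) := by
        conv_lhs => rw [hMN]
        exact frobInner_conj U _ _ hUUt
      rw [hM1, frobInner_sum] at h2
      simpa [pow_two] using h2.symm
    calc (∑ i, ∑ j, μm i j * ((U * M * Uᵀ) i j)^2)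
        ≤ ∑ i, ∑ j, lam i0 * ((U * M * Uᵀ) i j)^2 :=
          Finset.sum_le_sum fun i _ => Finset.sum_le_sum fun j _ =>
            mul_le_mul_of_nonneg_right (hμ_max i j) (sq_nonneg _)
      _ = lam i0 := by
          simp_rw [← Finset.mul_sum]
          rw [hnorm, mul_one]
      _ = _ := hval.symm
end

section
/- Let $q: \mathbb{R}^p \times \mathbb{R} \to \mathbb{R}$ be a link function invariant under permutation of its first $p$ coordinates, let $s \sim \mathcal{N}(0, I_p)$, $\epsilon$ independent noise, and $y = q(s, \epsilon)$. Define $E(y) = \mathbb{E}_s[s s^\top - I_p \mid y]$. Then for almost every $y$: all diagonal entries of $E(y)$ are equal, and all off-diagonal entries of $E(y)$ are equal. Consequently, all matrices $E(y)$ are simultaneously diagonalizable with a common eigenbasis independent of $y$. -/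
open MeasureTheory ProbabilityTheory Matrix
open scoped ProbabilityTheory


lemma aux_gaussian_memL2 : MemLp (id : ℝ → ℝ) 2 (gaussianReal 0 1) := by
  rw [memLp_two_iff_integrable_sq aestronglyMeasurable_id,
    gaussianReal_of_var_ne_zero 0 one_ne_zero,
    integrable_withDensity_iff (measurable_gaussianPDF 0 1)
      (ae_of_all _ fun x => ENNReal.ofReal_lt_top)]
  have h := (integrable_rpow_mul_exp_neg_mul_sq (b := (1:ℝ)/2) (by norm_num)
    (s := 2) (by norm_num)).const_mul ((Real.sqrt (2 * Real.pi))⁻¹)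
  refine h.congr (ae_of_all _ fun x => ?_)
  simp only [Real.rpow_two, gaussianPDF, gaussianPDFReal, id_eq]
  rw [ENNReal.toReal_ofReal (by positivity)]
  push_cast
  ring_nf

lemma aux_pi_map_eval {p : ℕ} (i : Fin p) :
    (Measure.pi fun _ : Fin p => gaussianReal 0 1).map (fun v => v i) = gaussianReal 0 1 := by
  ext A hA
  rw [Measure.map_apply (measurable_pi_apply i) hA, Set.eval_preimage, Measure.pi_pi]
  rw [Finset.prod_eq_single i (fun b _ hb => by simp [Function.update_of_ne hb]) (by simp)]
  simp

lemma aux_pi_map_perm {p : ℕ} (π : Equiv.Perm (Fin p)) :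
    (Measure.pi fun _ : Fin p => gaussianReal 0 1).map (fun v => v ∘ π)
      = Measure.pi fun _ : Fin p => gaussianReal 0 1 := by
  have h := measurePreserving_piCongrLeft (fun _ : Fin p => gaussianReal 0 1) π.symm
  have he : ⇑(MeasurableEquiv.piCongrLeft (fun _ : Fin p => ℝ) π.symm)
      = fun v => v ∘ π := by
    funext v j
    have h2 := MeasurableEquiv.piCongrLeft_apply_apply (π.symm)
      (β := fun _ : Fin p => ℝ) v (π j)
    simpa using h2
  have := h.map_eq
  rwa [he] at this

lemma aux_perm_exists {p : ℕ} {i j i' j' : Fin p} (hij : i ≠ j) (hij' : i' ≠ j') :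
    ∃ π : Equiv.Perm (Fin p), π i = i' ∧ π j = j' := by
  have ht : Equiv.swap i i' j ≠ i' := by
    rcases eq_or_ne j i' with rfl | hji'
    · rw [Equiv.swap_apply_right]; exact fun h => hij h
    · rwa [Equiv.swap_apply_of_ne_of_ne (Ne.symm hij) hji']
  refine ⟨(Equiv.swap i i').trans (Equiv.swap (Equiv.swap i i' j) j'), ?_, ?_⟩
  · simp only [Equiv.trans_apply, Equiv.swap_apply_left]
    exact Equiv.swap_apply_of_ne_of_ne (Ne.symm ht) hij'
  · simp only [Equiv.trans_apply, Equiv.swap_apply_left]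

lemma aux_pointwise {p : ℕ} (M : Matrix (Fin p) (Fin p) ℝ)
    (hd : ∀ i i', M i i = M i' i')
    (ho : ∀ i j i' j', i ≠ j → i' ≠ j' → M i j = M i' j') :
    (∃ c : ℝ, M.mulVec (fun _ => (1 : ℝ)) = c • fun _ => (1 : ℝ))
    ∧ ∀ j k : Fin p, j ≠ k →
        M.mulVec (Pi.single j 1 - Pi.single k 1)
          = (M j j - M j k) • (Pi.single j 1 - Pi.single k 1) := by
  have rowsum : ∀ a b : Fin p, ∑ l, M a l = ∑ l, M b l := by
    intro a b
    rcases eq_or_ne a b with rfl | hab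
    · rfl
    calc ∑ l, M a l = ∑ l, M a (Equiv.swap a b l) := (Equiv.sum_comp _ _).symm
      _ = ∑ l, M b l := by
          refine Finset.sum_congr rfl fun l _ => ?_
          rcases eq_or_ne l a with rfl | hla
          · rw [Equiv.swap_apply_left]; exact ho l b b l hab (Ne.symm hab)
          rcases eq_or_ne l b with rfl | hlb
          · rw [Equiv.swap_apply_right]; exact hd a l
          · rw [Equiv.swap_apply_of_ne_of_ne hla hlb]
            exact ho a l b l (Ne.symm hla) (Ne.symm hlb)
  constructor
  · rcases isEmpty_or_nonempty (Fin p) with hp | hp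
    · exact ⟨0, funext fun i => isEmptyElim i⟩
    · obtain i₀ : Fin p := Classical.arbitrary (Fin p)
      refine ⟨∑ l, M i₀ l, funext fun i => ?_⟩
      simp only [Matrix.mulVec, dotProduct, mul_one, Pi.smul_apply, smul_eq_mul]
      exact rowsum i i₀
  · intro j k hjk
    have hL : ∀ i, M.mulVec (Pi.single j 1 - Pi.single k 1) i = M i j - M i k := by
      intro i
      simp [Matrix.mulVec, dotProduct, Pi.single_apply, mul_sub, mul_ite,
        Finset.sum_sub_distrib, Finset.sum_ite_eq']
    funext i
    rw [hL]
    simp only [Pi.smul_apply, Pi.sub_apply, Pi.single_apply, smul_eq_mul]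
    rcases eq_or_ne i j with rfl | hij
    · rw [if_pos rfl, if_neg hjk]; ring
    rcases eq_or_ne i k with rfl | hik
    · rw [if_neg hij, if_pos rfl, ho i j j i (Ne.symm hjk) hjk, hd i j]
      ring
    · rw [if_neg hij, if_neg hik, ho i j i k hij hik]
      ring

/-- For a permutation-invariant link `q`, `s ~ N(0, I_p)`, noise `ε`
independent of `s`, and `y = q(s, ε)`, the conditional matrix `E(y) = E[s sᵀ - I | y]` has
(a.e.) all diagonal entries equal and all off-diagonal entries equal; consequently the
all-ones vector and the differences `e_j - e_k` form a common eigenbasis independent of `y`. -/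
theorem statement14 {Ω : Type*} [MeasureSpace Ω] [IsProbabilityMeasure (ℙ : Measure Ω)]
    {p : ℕ}
    (s : Ω → Fin p → ℝ) (hs_meas : Measurable s)
    (hs_law : Measure.map s ℙ = Measure.pi fun _ : Fin p => gaussianReal 0 1)
    (ε : Ω → ℝ) (hε_meas : Measurable ε) (hindep : IndepFun s ε ℙ)
    (q : (Fin p → ℝ) → ℝ → ℝ) (hq_meas : Measurable fun v : (Fin p → ℝ) × ℝ => q v.1 v.2)
    (hq_inv : ∀ (π : Equiv.Perm (Fin p)) (v : Fin p → ℝ) (e : ℝ),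
      q (v ∘ π) e = q v e)
    (y : Ω → ℝ) (hy : y = fun ω => q (s ω) (ε ω))
    (m : MeasurableSpace Ω) (hm : m = MeasurableSpace.comap y inferInstance)
    (Em : Ω → Matrix (Fin p) (Fin p) ℝ)
    (hEm : ∀ ω i j, Em ω i j =
      if i = j then MeasureTheory.condExp m ℙ (fun ω' => s ω' i ^ 2 - 1) ω
      else MeasureTheory.condExp m ℙ (fun ω' => s ω' i * s ω' j) ω) :
    (∀ i i' : Fin p,
      (MeasureTheory.condExp m ℙ fun ω' => s ω' i ^ 2 - 1)
        =ᵐ[ℙ] (MeasureTheory.condExp m ℙ fun ω' => s ω' i' ^ 2 - 1))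
    ∧ (∀ i j i' j' : Fin p, i ≠ j → i' ≠ j' →
      (MeasureTheory.condExp m ℙ fun ω' => s ω' i * s ω' j)
        =ᵐ[ℙ] (MeasureTheory.condExp m ℙ fun ω' => s ω' i' * s ω' j'))
    ∧ (∀ᵐ ω ∂ℙ,
        (∃ c : ℝ, (Em ω).mulVec (fun _ => (1 : ℝ)) = c • fun _ => (1 : ℝ))
        ∧ ∀ j k : Fin p, j ≠ k →
            (Em ω).mulVec (Pi.single j 1 - Pi.single k 1)
              = (Em ω j j - Em ω j k) • (Pi.single j 1 - Pi.single k 1)) := by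
  letI : MeasurableSpace Ω := MeasureSpace.toMeasurableSpace
  subst hy
  set μp : Measure (Fin p → ℝ) := Measure.pi fun _ : Fin p => gaussianReal 0 1 with hμp
  set y : Ω → ℝ := fun ω => q (s ω) (ε ω) with hy
  have hy_meas : Measurable[MeasureSpace.toMeasurableSpace] y :=
    hq_meas.comp (hs_meas.prodMk hε_meas)
  have hmle : m ≤ (MeasureSpace.toMeasurableSpace : MeasurableSpace Ω) := by
    rw [hm]; exact measurable_iff_comap_le.mp hy_meas
  set ν : Measure ℝ := Measure.map ε ℙ with hν
  haveI : IsProbabilityMeasure ν := Measure.isProbabilityMeasure_map hε_meas.aemeasurable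
  haveI : IsProbabilityMeasure μp := by rw [hμp]; infer_instance
  -- the key symmetry lemma
  have key : ∀ (F : (Fin p → ℝ) → ℝ), Measurable F → Integrable (fun ω => F (s ω)) ℙ →
      ∀ π : Equiv.Perm (Fin p),
      MeasureTheory.condExp m ℙ (fun ω => F (s ω))
        =ᵐ[ℙ] MeasureTheory.condExp m ℙ (fun ω => F (s ω ∘ π)) := by
    intro F hF hFint π
    have hprecomp : Measurable (fun v : Fin p → ℝ => v ∘ π) :=
      measurable_pi_iff.mpr fun j => measurable_pi_apply _
    have hsπ_meas : Measurable[MeasureSpace.toMeasurableSpace] (fun ω => s ω ∘ π) := hprecomp.comp hs_meas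
    have hmap1 : Measure.map (fun ω => (s ω, ε ω)) ℙ = μp.prod ν := by
      rw [← hs_law, hν]
      exact (indepFun_iff_map_prod_eq_prod_map_map hs_meas.aemeasurable
        hε_meas.aemeasurable).mp hindep
    have hslawπ : Measure.map (fun ω => s ω ∘ π) ℙ = μp := by
      rw [show (fun ω => s ω ∘ π) = (fun v : Fin p → ℝ => v ∘ π) ∘ s from rfl,
        ← Measure.map_map hprecomp hs_meas, hs_law]
      exact aux_pi_map_perm π
    have hmap2 : Measure.map (fun ω => (s ω ∘ π, ε ω)) ℙ = μp.prod ν := by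
      rw [show (fun ω => (s ω ∘ π, ε ω))
          = (Prod.map (fun v : Fin p → ℝ => v ∘ π) id) ∘ (fun ω => (s ω, ε ω)) from rfl,
        ← Measure.map_map (hprecomp.prodMap measurable_id) (hs_meas.prodMk hε_meas),
        hmap1, ← Measure.map_prod_map _ _ hprecomp measurable_id,
        aux_pi_map_perm π, Measure.map_id]
    have hFπint : Integrable (fun ω => F (s ω ∘ π)) ℙ := by
      have h1 : Integrable F μp := by
        rw [← hs_law]
        exact (integrable_map_measure hF.aestronglyMeasurable hs_meas.aemeasurable).mpr hFint
      have := (integrable_map_measure hF.aestronglyMeasurable hsπ_meas.aemeasurable).mp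
        (by rwa [hslawπ])
      exact this
    refine ae_eq_condExp_of_forall_setIntegral_eq hmle hFπint
      (fun A hA _ => integrable_condExp.integrableOn) (fun A hA hAfin => ?_)
      (MeasureTheory.StronglyMeasurable.aestronglyMeasurable stronglyMeasurable_condExp)
    rw [setIntegral_condExp hmle hFint hA]
    rw [hm] at hA
    obtain ⟨B, hB, rfl⟩ := hA
    have hAmeas : MeasurableSet[MeasureSpace.toMeasurableSpace] (y ⁻¹' B) := hy_meas hB
    rw [← integral_indicator hAmeas, ← integral_indicator hAmeas]
    set G : (Fin p → ℝ) × ℝ → ℝ :=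
      fun z => Set.indicator B (fun _ => (1 : ℝ)) (q z.1 z.2) * F z.1 with hG
    have hGmeas : Measurable G :=
      ((measurable_const.indicator hB).comp hq_meas).mul (hF.comp measurable_fst)
    have e1 : (y ⁻¹' B).indicator (fun ω => F (s ω)) = fun ω => G (s ω, ε ω) := by
      funext ω
      by_cases h : ω ∈ y ⁻¹' B
      · rw [Set.indicator_of_mem h]
        have h' : q (s ω) (ε ω) ∈ B := h
        simp only [hG, Set.indicator_of_mem h', one_mul]
      · rw [Set.indicator_of_notMem h]
        have h' : q (s ω) (ε ω) ∉ B := h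
        simp only [hG, Set.indicator_of_notMem h', zero_mul]
    have e2 : (y ⁻¹' B).indicator (fun ω => F (s ω ∘ π)) = fun ω => G (s ω ∘ π, ε ω) := by
      funext ω
      have hq' : q (s ω ∘ π) (ε ω) = q (s ω) (ε ω) := hq_inv π (s ω) (ε ω)
      by_cases h : ω ∈ y ⁻¹' B
      · rw [Set.indicator_of_mem h]
        have h' : q (s ω) (ε ω) ∈ B := h
        simp only [hG, hq', Set.indicator_of_mem h', one_mul]
      · rw [Set.indicator_of_notMem h]
        have h' : q (s ω) (ε ω) ∉ B := h
        simp only [hG, hq', Set.indicator_of_notMem h', zero_mul]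
    rw [e1, e2,
      ← integral_map (hs_meas.prodMk hε_meas).aemeasurable hGmeas.aestronglyMeasurable,
      ← integral_map (hsπ_meas.prodMk hε_meas).aemeasurable hGmeas.aestronglyMeasurable,
      hmap1, hmap2]
  -- integrability
  have hL2 : ∀ i, MemLp (fun ω => s ω i) 2 ℙ := by
    intro i
    have h2 : MemLp (id : ℝ → ℝ) 2 (μp.map (fun v => v i)) := by
      rw [hμp, aux_pi_map_eval]; exact aux_gaussian_memL2
    have h1 : MemLp (fun v : Fin p → ℝ => v i) 2 μp :=
      (memLp_map_measure_iff aestronglyMeasurable_id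
        (measurable_pi_apply i).aemeasurable).mp h2
    have := (memLp_map_measure_iff
      (measurable_pi_apply i).stronglyMeasurable.aestronglyMeasurable
      hs_meas.aemeasurable).mp (by rwa [hs_law])
    exact this
  have hmul : ∀ i j, Integrable (fun ω => s ω i * s ω j) ℙ := by
    intro i j
    have := memLp_one_iff_integrable.mp
      (MemLp.smul (p := 2) (q := 2) (r := 1) (hL2 j) (hL2 i))
    exact this
  have hsq : ∀ i, Integrable (fun ω => s ω i ^ 2 - 1) ℙ := by
    intro i
    simp only [sq]; exact ((hmul i i).sub (integrable_const (1 : ℝ)) : Integrable (fun ω => s ω i * s ω i - 1) ℙ)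
  have part1 : ∀ i i' : Fin p,
      (MeasureTheory.condExp m ℙ fun ω' => s ω' i ^ 2 - 1)
        =ᵐ[ℙ] (MeasureTheory.condExp m ℙ fun ω' => s ω' i' ^ 2 - 1) := by
    intro i i'
    have hF : Measurable (fun v : Fin p → ℝ => v i ^ 2 - 1) :=
      ((measurable_pi_apply i).pow_const 2).sub measurable_const
    have := key _ hF (hsq i) (Equiv.swap i i')
    simpa [Equiv.swap_apply_left] using this
  have part2 : ∀ i j i' j' : Fin p, i ≠ j → i' ≠ j' →
      (MeasureTheory.condExp m ℙ fun ω' => s ω' i * s ω' j)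
        =ᵐ[ℙ] (MeasureTheory.condExp m ℙ fun ω' => s ω' i' * s ω' j') := by
    intro i j i' j' hij hij'
    obtain ⟨π, hπi, hπj⟩ := aux_perm_exists hij hij'
    have hF : Measurable (fun v : Fin p → ℝ => v i * v j) :=
      (measurable_pi_apply i).mul (measurable_pi_apply j)
    have := key _ hF (hmul i j) π
    simpa [hπi, hπj] using this
  refine ⟨part1, part2, ?_⟩
  have h1 : ∀ᵐ ω ∂ℙ, ∀ i i' : Fin p,
      (MeasureTheory.condExp m ℙ fun ω' => s ω' i ^ 2 - 1) ω
        = (MeasureTheory.condExp m ℙ fun ω' => s ω' i' ^ 2 - 1) ω := by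
    rw [ae_all_iff]; intro i; rw [ae_all_iff]; intro i'; exact part1 i i'
  have h2 : ∀ᵐ ω ∂ℙ, ∀ i j i' j' : Fin p, i ≠ j → i' ≠ j' →
      (MeasureTheory.condExp m ℙ fun ω' => s ω' i * s ω' j) ω
        = (MeasureTheory.condExp m ℙ fun ω' => s ω' i' * s ω' j') ω := by
    rw [ae_all_iff]; intro i; rw [ae_all_iff]; intro j
    rw [ae_all_iff]; intro i'; rw [ae_all_iff]; intro j'
    by_cases hij : i ≠ j
    · by_cases hij' : i' ≠ j'
      · filter_upwards [part2 i j i' j' hij hij'] with ω h _ _; exact h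
      · filter_upwards with ω _ h'; exact absurd h' hij'
    · filter_upwards with ω h; exact absurd h hij
  filter_upwards [h1, h2] with ω hd ho
  have hdiagM : ∀ i i', Em ω i i = Em ω i' i' := by
    intro i i'
    rw [hEm ω i i, hEm ω i' i', if_pos rfl, if_pos rfl]
    exact hd i i'
  have hoffM : ∀ i j i' j', i ≠ j → i' ≠ j' → Em ω i j = Em ω i' j' := by
    intro i j i' j' h h'
    rw [hEm ω i j, hEm ω i' j', if_neg h, if_neg h']
    exact ho i j i' j' h h'
  exact aux_pointwise (Em ω) hdiagM hoffM
end

section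
/- Let $z_1,\ldots,z_n \in \mathbb{R}$, $s_1,\ldots,s_n \in \mathbb{R}^p$, $Z = \mathrm{diag}(z_1,\ldots,z_n)$, $S$ the $n\times p$ matrix with rows $s_i^\top$, and $a = \frac{1}{n}S^\top Z S$. For $\mu \in \mathbb{R}$ not an eigenvalue of $a$ (so that $a - \mu I_p$ is invertible) and $\alpha > \max_i z_i$, $\alpha$ is an eigenvalue of $M = Z - \frac{1}{n}(ZS)(a - \mu I_p)^{-1}(ZS)^\top$ if and only if $\det\Big(\mu I_p - \frac{1}{n}\sum_{i=1}^n \frac{\alpha z_i s_i s_i^\top}{\alpha - z_i}\Big) = 0$. -/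
open Matrix

/-- With `Z = diag(z)`, `S` the matrix with rows `s_iᵀ`,
`a = (1/n) Sᵀ Z S`, `a - μI` invertible and `α > max_i z_i`, `α` is an eigenvalue of
`M = Z - (1/n)(ZS)(a - μI)⁻¹(ZS)ᵀ` iff
`det(μ I_p - (1/n) ∑ᵢ α zᵢ sᵢ sᵢᵀ / (α - zᵢ)) = 0`. -/
theorem statement17 {n p : ℕ} (hn : 0 < n)
    (z : Fin n → ℝ) (s : Fin n → Fin p → ℝ) (μ α : ℝ)
    (hα : ∀ i, z i < α)
    (S : Matrix (Fin n) (Fin p) ℝ) (hS : S = Matrix.of fun i j => s i j)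
    (Z : Matrix (Fin n) (Fin n) ℝ) (hZ : Z = Matrix.diagonal z)
    (a : Matrix (Fin p) (Fin p) ℝ) (ha : a = (n : ℝ)⁻¹ • (Sᵀ * Z * S))
    (hinv : IsUnit (a - μ • (1 : Matrix (Fin p) (Fin p) ℝ)).det)
    (M : Matrix (Fin n) (Fin n) ℝ)
    (hM : M = Z - (n : ℝ)⁻¹ •
      ((Z * S) * (a - μ • (1 : Matrix (Fin p) (Fin p) ℝ))⁻¹ * (Z * S)ᵀ)) :
    (M - α • (1 : Matrix (Fin n) (Fin n) ℝ)).det = 0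
      ↔ (μ • (1 : Matrix (Fin p) (Fin p) ℝ)
          - (n : ℝ)⁻¹ • ∑ i, (α * z i / (α - z i)) • Matrix.vecMulVec (s i) (s i)).det
        = 0 := by
  classical
  set c : ℝ := (n : ℝ)⁻¹ with hc
  set A : Matrix (Fin p) (Fin p) ℝ := a - μ • (1 : Matrix (Fin p) (Fin p) ℝ) with hA
  set T : Matrix (Fin p) (Fin p) ℝ :=
    μ • (1 : Matrix (Fin p) (Fin p) ℝ)
      - c • ∑ i, (α * z i / (α - z i)) • Matrix.vecMulVec (s i) (s i) with hT
  have hd : ∀ i, z i - α ≠ 0 := fun i => sub_ne_zero.mpr (ne_of_lt (hα i))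
  set d : Fin n → ℝ := fun i => z i - α with hdd
  set D : Matrix (Fin n) (Fin n) ℝ := Matrix.diagonal d with hD
  set E : Matrix (Fin n) (Fin n) ℝ := Matrix.diagonal (fun i => (d i)⁻¹) with hE
  have hDE : D * E = 1 := by
    rw [hD, hE, diagonal_mul_diagonal]
    have : (fun i => d i * (d i)⁻¹) = fun _ => (1 : ℝ) :=
      funext fun i => mul_inv_cancel₀ (hd i)
    rw [this, Matrix.diagonal_one]
  have hDdet : D.det ≠ 0 := by
    rw [hD, Matrix.det_diagonal]
    exact Finset.prod_ne_zero_iff.mpr fun i _ => hd i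
  have hAdet : A.det ≠ 0 := hinv.ne_zero
  -- Step 1: rewrite M - α•1
  have hZD : Z - α • (1 : Matrix (Fin n) (Fin n) ℝ) = D := by
    rw [hZ, hD]
    ext i j
    by_cases h : i = j <;> simp [Matrix.diagonal_apply, Matrix.one_apply, h, hdd]
  set X : Matrix (Fin n) (Fin n) ℝ := (Z * S) * A⁻¹ * (Z * S)ᵀ with hX
  have step1 : M - α • (1 : Matrix (Fin n) (Fin n) ℝ) = D * (1 - E * (c • X)) := by
    rw [Matrix.mul_sub, Matrix.mul_one, ← Matrix.mul_assoc, hDE, Matrix.one_mul,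
      hM, sub_right_comm, hZD]
  set G : Matrix (Fin p) (Fin p) ℝ := c • ((Z * S)ᵀ * E * (Z * S)) with hG
  have step2 : (1 - E * (c • X)).det = (1 - G * A⁻¹).det := by
    have e1 : E * (c • X) = (c • (E * (Z * S) * A⁻¹)) * (Z * S)ᵀ := by
      rw [Matrix.smul_mul, hX, Matrix.mul_smul]
      congr 1
      rw [← Matrix.mul_assoc, ← Matrix.mul_assoc]
    have e2 : (Z * S)ᵀ * (c • (E * (Z * S) * A⁻¹)) = G * A⁻¹ := by
      rw [Matrix.mul_smul, hG, Matrix.smul_mul]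
      congr 1
      rw [← Matrix.mul_assoc, ← Matrix.mul_assoc]
    rw [e1, Matrix.det_one_sub_mul_comm, e2]
  have step3 : (1 - G * A⁻¹).det * A.det = (A - G).det := by
    rw [← Matrix.det_mul, Matrix.sub_mul, Matrix.one_mul, Matrix.mul_assoc,
      Matrix.nonsing_inv_mul A hinv, Matrix.mul_one]
  have step4 : A - G = -T := by
    ext j k
    have key : ∀ i : Fin n,
        z i * s i j * s i k - (z i * s i j) * (d i)⁻¹ * (z i * s i k)
          = α * z i / (α - z i) * (s i j * s i k) := by
      intro i
      have hαz : α - z i ≠ 0 := sub_ne_zero.mpr (ne_of_gt (hα i))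
      have h2 : z i - α ≠ 0 := hd i
      rw [hdd]
      field_simp
      ring
    simp only [hA, hG, hT, ha, hS, hZ, hE, Matrix.sub_apply, Matrix.neg_apply,
      Matrix.smul_apply, Matrix.mul_apply, Matrix.transpose_apply, Matrix.one_apply,
      Matrix.diagonal_apply, Matrix.of_apply, Matrix.sum_apply,
      Matrix.vecMulVec_apply, smul_eq_mul, mul_ite, ite_mul, mul_zero, zero_mul,
      Finset.sum_ite_eq, Finset.sum_ite_eq', Finset.mem_univ, if_true,
      Matrix.mul_diagonal, Matrix.diagonal_mul]
    have hsum : (∑ x, s x j * z x * s x k)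
        - ∑ x, z x * s x j * (d x)⁻¹ * (z x * s x k)
        = ∑ x, α * z x / (α - z x) * (s x j * s x k) := by
      rw [← Finset.sum_sub_distrib]
      exact Finset.sum_congr rfl fun i _ => by rw [← key i]; ring
    linear_combination c * hsum
  have main : (M - α • (1 : Matrix (Fin n) (Fin n) ℝ)).det * A.det
      = D.det * ((-1 : ℝ) ^ p * T.det) := by
    rw [step1, Matrix.det_mul, mul_assoc, step2, step3, step4, Matrix.det_neg]
    simp
  constructor
  · intro h
    have := main.symm
    rw [h, zero_mul] at this
    rcases mul_eq_zero.mp this with h1 | h1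
    · exact absurd h1 hDdet
    rcases mul_eq_zero.mp h1 with h2 | h2
    · exact absurd h2 (by positivity)
    · exact h2
  · intro h
    have : (M - α • (1 : Matrix (Fin n) (Fin n) ℝ)).det * A.det = 0 := by
      rw [main, h, mul_zero, mul_zero]
    rcases mul_eq_zero.mp this with h1 | h1
    · exact h1
    · exact absurd h1 hAdet
end
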